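/- arXiv:1608.06969 — 6 statements merged into one kernel-verified Lean document; each statement's English description precedes it below -/
import Mathlib

section
/- For any permutation classes C and D whose upper growth rates limsup_{n→∞} |C_n|^{1/n} and limsup_{n→∞} |D_n|^{1/n} are finite, the upper growth rate of their merge satisfies limsup_{n→∞} |(C⊙D)_n|^{1/n} ≤ (√(limsup_{n→∞} |C_n|^{1/n}) + √(limsup_{n→∞} |D_n|^{1/n}))². -/
open Filter Topology ENNReal

/-- A permutation of length `n`, in one-line notation `π 0, π 1, …, π (n-1)`. -/
abbrev Perm (n : ℕ) := Equiv.Perm (Fin n)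

/-- `Pattern σ π` : the permutation `σ` is contained in `π`, i.e. some subsequence of `π`
is order isomorphic to `σ`. -/
def Pattern {k n : ℕ} (σ : Perm k) (π : Perm n) : Prop :=
  ∃ f : Fin k ↪o Fin n, ∀ i j : Fin k, σ i < σ j ↔ π (f i) < π (f j)

/-- A permutation class: a set of permutations closed downwards under containment. -/
structure PermClass where
  mem : ∀ n, Set (Perm n)
  closed : ∀ {k n : ℕ} (σ : Perm k) (π : Perm n), π ∈ mem n → Pattern σ π → σ ∈ mem k

/-- The entries of `π` at the positions in `A` form a sequence order isomorphic
to a member of the family `F`. -/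
def SubpermIn {n : ℕ} (π : Perm n) (A : Set (Fin n)) (F : ∀ m, Set (Perm m)) : Prop :=
  ∃ (m : ℕ) (σ : Perm m) (f : Fin m ↪o Fin n),
    Set.range ⇑f = A ∧ (∀ i j : Fin m, σ i < σ j ↔ π (f i) < π (f j)) ∧ σ ∈ F m

/-- The merge `C ⊙ D`: permutations whose entries can be partitioned into a subsequence
order isomorphic to a member of `C` and one order isomorphic to a member of `D`. -/
def mergeSet (C D : ∀ m, Set (Perm m)) (n : ℕ) : Set (Perm n) :=
  {π | ∃ A : Set (Fin n), SubpermIn π A C ∧ SubpermIn π Aᶜ D}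

/-- `|F_n| ^ (1/n)` as a real number. -/
noncomputable def growthSeq (F : ∀ m, Set (Perm m)) (n : ℕ) : ℝ :=
  ((F n).ncard : ℝ) ^ ((n : ℝ)⁻¹)

/-- The family `F` has (finite) proper growth rate `g`. -/
def HasGrowth (F : ∀ m, Set (Perm m)) (g : ℝ) : Prop :=
  Tendsto (growthSeq F) atTop (𝓝 g)

/-- `|F_n| ^ (1/n)` in the extended nonnegative reals. -/
noncomputable def eGrowthSeq (F : ∀ m, Set (Perm m)) (n : ℕ) : ℝ≥0∞ :=
  ((F n).ncard : ℝ≥0∞) ^ ((n : ℝ)⁻¹)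

/-- The upper growth rate `limsup |F_n|^(1/n)`. -/
noncomputable def ugr (F : ∀ m, Set (Perm m)) : ℝ≥0∞ := limsup (eGrowthSeq F) atTop

/-- The lower growth rate `liminf |F_n|^(1/n)`. -/
noncomputable def lgr (F : ∀ m, Set (Perm m)) : ℝ≥0∞ := liminf (eGrowthSeq F) atTop

/-- The direct sum `π ⊕ σ` of two permutations. -/
def dsum {m n : ℕ} (π : Perm m) (σ : Perm n) : Perm (m + n) :=
  finSumFinEquiv.symm.trans ((Equiv.sumCongr π σ).trans finSumFinEquiv)

/-- The skew sum `π ⊖ σ` of two permutations. -/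
def skewSum {m n : ℕ} (π : Perm m) (σ : Perm n) : Perm (m + n) :=
  finSumFinEquiv.symm.trans ((Equiv.sumCongr π σ).trans
    (((Equiv.sumComm (Fin m) (Fin n)).trans finSumFinEquiv).trans (finCongr (Nat.add_comm n m))))

/-- A family of permutations is sum closed if it is closed under `⊕`. -/
def SumClosed (F : ∀ m, Set (Perm m)) : Prop :=
  ∀ {m n : ℕ} (π : Perm m) (σ : Perm n), π ∈ F m → σ ∈ F n → dsum π σ ∈ F (m + n)

/-- A family of permutations is skew closed if it is closed under `⊖`. -/
def SkewClosed (F : ∀ m, Set (Perm m)) : Prop :=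
  ∀ {m n : ℕ} (π : Perm m) (σ : Perm n), π ∈ F m → σ ∈ F n → skewSum π σ ∈ F (m + n)

/-- The class of an empty (blocked) grid cell: only the empty permutation. -/
def emptyCell : ∀ m, Set (Perm m) := fun m => {_π | m = 0}

/-- The set of positions of `π` lying in column `k` and row `ℓ` of the gridding
determined by the column divisions `c` and row divisions `r`. -/
def cellSet {n : ℕ} (π : Perm n) (c r : ℕ → ℕ) (k ℓ : ℕ) : Set (Fin n) :=
  {i | c k ≤ (i : ℕ) ∧ (i : ℕ) < c (k + 1) ∧ r ℓ ≤ (π i : ℕ) ∧ (π i : ℕ) < r (ℓ + 1)}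

/-- The grid class of an (infinite) matrix `M` of families of permutations, where
`M k ℓ` is the cell in column `k`, row `ℓ` (Cartesian coordinates, indexed from 0). -/
def gridSet (M : ℕ → ℕ → ∀ m, Set (Perm m)) (n : ℕ) : Set (Perm n) :=
  {π | ∃ c r : ℕ → ℕ, Monotone c ∧ Monotone r ∧ c 0 = 0 ∧ r 0 = 0 ∧
    (∀ k, c k ≤ n) ∧ (∀ ℓ, r ℓ ≤ n) ∧ (∃ k, c k = n) ∧ (∃ ℓ, r ℓ = n) ∧
    ∀ k ℓ, cellSet π c r k ℓ = ∅ ∨ SubpermIn π (cellSet π c r k ℓ) (M k ℓ)}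

/-- The matrix of the infinite increasing `(C, D)` staircase: cell in column `i`, row `i`
is `C`, cell in column `i+1`, row `i` is `D`, all other cells empty. -/
def incStairM (C D : ∀ m, Set (Perm m)) : ℕ → ℕ → ∀ m, Set (Perm m) :=
  fun k ℓ => if k = ℓ then C else if k = ℓ + 1 then D else emptyCell

/-- The decreasing permutation `k (k-1) ⋯ 2 1` of length `k`. -/
def delta (k : ℕ) : Perm k := ⟨Fin.rev, Fin.rev, Fin.rev_rev, Fin.rev_rev⟩

/-- The class of permutations avoiding the pattern `τ`. -/
def avSet {k : ℕ} (τ : Perm k) : ∀ n, Set (Perm n) := fun n => {π | ¬ Pattern τ π}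

/-- The shape of an infinite `(C,D)` staircase: `pos j` is the (column, row) position of
the `(j+1)`-st cell; odd-indexed steps share a row with their predecessor, even-indexed
steps share a column with their predecessor, and no other sharing of rows or columns occurs. -/
structure StaircaseData where
  pos : ℕ → ℕ × ℕ
  inj : Function.Injective pos
  rowEq : ∀ i, (pos (2 * i + 1)).2 = (pos (2 * i)).2
  colEq : ∀ i, (pos (2 * i + 2)).1 = (pos (2 * i + 1)).1
  rowOnly : ∀ j j', (pos j).2 = (pos j').2 → j / 2 = j' / 2
  colOnly : ∀ j j', (pos j).1 = (pos j').1 → (j + 1) / 2 = (j' + 1) / 2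

open Classical in
/-- The matrix of the infinite `(C,D)` staircase with shape `S`: the odd-numbered cells
(cells `1, 3, 5, …`, i.e. `pos 0, pos 2, …`) are `C`, the even-numbered cells are `D`. -/
noncomputable def StaircaseData.M (S : StaircaseData) (C D : ∀ m, Set (Perm m)) :
    ℕ → ℕ → ∀ m, Set (Perm m) :=
  fun k ℓ => if ∃ i, S.pos (2 * i) = (k, ℓ) then C
    else if ∃ i, S.pos (2 * i + 1) = (k, ℓ) then D else emptyCell

open Classical in
/-- The matrix of the `t`-step restriction of the staircase: only the first `2t` cells. -/
noncomputable def StaircaseData.Mstep (S : StaircaseData) (C D : ∀ m, Set (Perm m)) (t : ℕ) :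
    ℕ → ℕ → ∀ m, Set (Perm m) :=
  fun k ℓ => if ∃ i < t, S.pos (2 * i) = (k, ℓ) then C
    else if ∃ i < t, S.pos (2 * i + 1) = (k, ℓ) then D else emptyCell

/-!
A permutation of length `n` in `C ⊙ D` is determined by the set `A` of its `C`-positions, the
set of values it takes on `A`, and the patterns `σ ∈ C_k`, `τ ∈ D_{n-k}` it forms on `A` and on
the complement of `A`; hence `|(C ⊙ D)_n| ≤ ∑ₖ (n choose k)² |C_k| |D_{n-k}|`. If `x² > ugr C`
and `y² > ugr D`, then `|C_k| ≤ M x^{2k}` and `|D_k| ≤ M' y^{2k}` for all `k`, so this sum is at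
most `M M' (∑ₖ (n choose k) x^k y^{n-k})² = M M' (x + y)^{2n}` and `ugr (C ⊙ D) ≤ (x + y)²`.
Letting `x` and `y` decrease to `√(ugr C)` and `√(ugr D)` gives the theorem.
-/

def PatternOn {k n : ℕ} (σ : Perm k) (π : Perm n) (A : Set (Fin n)) : Prop :=
  ∃ f : Fin k ↪o Fin n, Set.range f = A ∧ ∀ i j, σ i < σ j ↔ π (f i) < π (f j)

namespace PatternOn

variable {k n : ℕ} {σ : Perm k} {π π' : Perm n} {A : Set (Fin n)}

theorem ncard_eq (h : PatternOn σ π A) : A.ncard = k := by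
  obtain ⟨f, rfl, -⟩ := h
  rw [Set.ncard_range_of_injective f.injective, Nat.card_fin]

/-- Read in the order prescribed by `σ`, the values of `π` on `A` enumerate `π '' A`
increasingly. -/
theorem eqOn (h : PatternOn σ π A) (h' : PatternOn σ π' A) (himage : π '' A = π' '' A) :
    Set.EqOn π π' A := by
  obtain ⟨f, rfl, hf⟩ := h
  obtain ⟨g, hfg, hg⟩ := h'
  obtain rfl : f = g := by
    ext1 i
    exact congrFun ((f.strictMono.range_inj g.strictMono).1 hfg.symm) i
  have hmono : ∀ ρ : Perm n, (∀ i j, σ i < σ j ↔ ρ (f i) < ρ (f j)) →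
      StrictMono (ρ ∘ f ∘ σ.symm) := fun ρ hρ a b hab => by
    simpa using (hρ (σ.symm a) (σ.symm b)).1 (by simpa using hab)
  have hrange : ∀ ρ : Perm n, Set.range (ρ ∘ f ∘ σ.symm) = ρ '' Set.range f := fun ρ => by
    rw [Set.range_comp, Set.range_comp, σ.symm.range_eq_univ, Set.image_univ]
  have heq := ((hmono π hf).range_inj (hmono π' hg)).1 (by rw [hrange, hrange, himage])
  rintro _ ⟨i, rfl⟩
  simpa using congrFun heq (σ i)

end PatternOn

theorem exists_patternOn_of_mem_mergeSet {C D : ∀ m, Set (Perm m)} {n : ℕ} {π : Perm n}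
    (hπ : π ∈ mergeSet C D n) :
    ∃ k, ∃ A : Finset (Fin n), ∃ σ ∈ C k, ∃ τ ∈ D (n - k),
      PatternOn σ π A ∧ PatternOn τ π (↑A)ᶜ := by
  classical
  obtain ⟨A, ⟨k, σ, f, hf, hσ, hσC⟩, ⟨l, τ, g, hg, hτ, hτD⟩⟩ := hπ
  have hA : PatternOn σ π A := ⟨f, hf, hσ⟩
  have hAc : PatternOn τ π Aᶜ := ⟨g, hg, hτ⟩
  obtain rfl : l = n - k := by
    have := Set.ncard_add_ncard_compl A
    rw [hA.ncard_eq, hAc.ncard_eq, Nat.card_fin] at this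
    omega
  exact ⟨k, A.toFinset, σ, hσC, τ, hτD, by simpa using hA, by simpa using hAc⟩

theorem ncard_mergeSet_le (C D : ∀ m, Set (Perm m)) (n : ℕ) :
    (mergeSet C D n).ncard ≤
      ∑ k ∈ Finset.range (n + 1), n.choose k ^ 2 * ((C k).ncard * (D (n - k)).ncard) := by
  classical
  let T : Finset (Σ k, Finset (Fin n) × Finset (Fin n) × Perm k × Perm (n - k)) :=
    (Finset.range (n + 1)).sigma fun k =>
      Finset.powersetCard k Finset.univ ×ˢ Finset.powersetCard k Finset.univ ×ˢ
        (C k).toFinset ×ˢ (D (n - k)).toFinset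
  let r : Perm n → (Σ k, Finset (Fin n) × Finset (Fin n) × Perm k × Perm (n - k)) → Prop :=
    fun π ⟨_, A, B, σ, τ⟩ => PatternOn σ π A ∧ PatternOn τ π (↑A)ᶜ ∧ A.image π = B
  calc (mergeSet C D n).ncard = (mergeSet C D n).toFinset.card :=
        Set.ncard_eq_toFinset_card' _
    _ ≤ T.card := by
      refine Finset.card_le_card_of_forall_subsingleton r (fun π hπ => ?_) ?_
      · obtain ⟨k, A, σ, hσ, τ, hτ, hA, hAc⟩ :=
          exists_patternOn_of_mem_mergeSet (Set.mem_toFinset.1 hπ)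
        have hk : A.card = k := by simpa using hA.ncard_eq
        refine ⟨⟨k, A, A.image π, σ, τ⟩, ?_, hA, hAc, rfl⟩
        simp only [T, Finset.mem_sigma, Finset.mem_range, Finset.mem_product,
          Finset.mem_powersetCard_univ, Set.mem_toFinset,
          Finset.card_image_of_injective _ π.injective]
        exact ⟨Nat.lt_succ_of_le (hk ▸ A.card_le_univ.trans_eq (Fintype.card_fin n)),
          hk, hk, hσ, hτ⟩
      · rintro ⟨k, A, B, σ, τ⟩ - π ⟨-, hA, hAc, hB⟩ π' ⟨-, hA', hAc', hB'⟩
        have himage : π '' A = π' '' A := by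
          rw [← Finset.coe_image, ← Finset.coe_image, hB, hB']
        have himage_compl : π '' (↑A)ᶜ = π' '' (↑A)ᶜ := by
          rw [Set.image_compl_eq π.bijective, Set.image_compl_eq π'.bijective, himage]
        ext1 x
        by_cases hx : x ∈ A
        · exact hA.eqOn hA' himage hx
        · exact hAc.eqOn hAc' himage_compl hx
    _ = _ := by
      simp [T, Finset.card_sigma, Finset.card_product, Set.ncard_eq_toFinset_card', mul_assoc,
        sq]

theorem exists_le_mul_pow_of_limsup_rpow_inv_lt {u : ℕ → ℝ≥0∞} (hu : ∀ n, u n ≠ ⊤)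
    {c : ℝ≥0∞} (hc : c ≠ ⊤) (h : limsup (fun n : ℕ => u n ^ (n : ℝ)⁻¹) atTop < c) :
    ∃ M ≠ ⊤, ∀ n, u n ≤ M * c ^ n := by
  have hc0 : c ≠ 0 := (h.trans_le' bot_le).ne'
  obtain ⟨N, hN⟩ := eventually_atTop.1
    ((eventually_lt_of_limsup_lt h).and (eventually_gt_atTop 0))
  refine ⟨max 1 ((Finset.range N).sup fun m => u m / c ^ m), ?_, fun n => ?_⟩
  · refine (max_lt one_lt_top ((Finset.sup_lt_iff bot_lt_top).2 fun m _ => ?_)).ne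
    exact ENNReal.div_lt_top (hu m) (pow_ne_zero m hc0)
  rcases lt_or_ge n N with hn | hn
  · calc u n = u n / c ^ n * c ^ n :=
          (ENNReal.div_mul_cancel (pow_ne_zero n hc0) (pow_ne_top hc)).symm
      _ ≤ _ := by
          gcongr
          exact (Finset.le_sup (f := fun m => u m / c ^ m) (Finset.mem_range.2 hn)).trans
            (le_max_right _ _)
  · obtain ⟨hlt, hn0⟩ := hN n hn
    calc u n ≤ c ^ n := by
          rw [← ENNReal.rpow_natCast]
          exact (ENNReal.rpow_inv_le_iff (by exact_mod_cast hn0)).1 hlt.le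
      _ ≤ _ := le_mul_of_one_le_left' (le_max_left _ _)

theorem limsup_rpow_inv_le_of_le_mul_pow {u : ℕ → ℝ≥0∞} {M K : ℝ≥0∞} (hM : M ≠ ⊤)
    (h : ∀ n, u n ≤ M * K ^ n) : limsup (fun n : ℕ => u n ^ (n : ℝ)⁻¹) atTop ≤ K := by
  lift M to NNReal using hM
  set M' : NNReal := max M 1
  have hM' : M' ≠ 0 := (one_pos.trans_le (le_max_right M 1)).ne'
  have hroot : Tendsto (fun n : ℕ => (M' : ℝ≥0∞) ^ (n : ℝ)⁻¹) atTop (𝓝 1) := by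
    have := (tendsto_const_nhds : Tendsto (fun _ : ℕ => M') atTop (𝓝 M')).nnrpow
      (tendsto_inv_atTop_zero.comp tendsto_natCast_atTop_atTop) (Or.inl hM')
    simpa [ENNReal.coe_rpow_of_ne_zero hM'] using ENNReal.tendsto_coe.2 this
  have hbound :
      ∀ᶠ n : ℕ in atTop, u n ^ (n : ℝ)⁻¹ ≤ (M' : ℝ≥0∞) ^ (n : ℝ)⁻¹ * K := by
    filter_upwards [eventually_gt_atTop 0] with n hn
    have hn' : (0 : ℝ) < n := by exact_mod_cast hn
    calc u n ^ (n : ℝ)⁻¹ ≤ ((M' : ℝ≥0∞) * K ^ n) ^ (n : ℝ)⁻¹ := by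
          gcongr
          exact (h n).trans (by gcongr; exact_mod_cast le_max_left M 1)
      _ = _ := by
          rw [ENNReal.mul_rpow_of_nonneg _ _ (inv_nonneg.2 hn'.le), ← ENNReal.rpow_natCast,
            ← ENNReal.rpow_mul, mul_inv_cancel₀ hn'.ne', ENNReal.rpow_one]
  calc _ ≤ limsup (fun n : ℕ => (M' : ℝ≥0∞) ^ (n : ℝ)⁻¹ * K) atTop :=
        limsup_le_limsup hbound
    _ = K := by simpa using (ENNReal.Tendsto.mul_const hroot (.inl one_ne_zero)).limsup_eq

theorem ugr_mergeSet_le {C D : ∀ m, Set (Perm m)} {x y : ℝ≥0∞}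
    (hx : ugr C < x ^ 2) (hy : ugr D < y ^ 2) : ugr (mergeSet C D) ≤ (x + y) ^ 2 := by
  rcases eq_or_ne x ⊤ with rfl | hxt
  · simp
  rcases eq_or_ne y ⊤ with rfl | hyt
  · simp
  obtain ⟨MC, hMC, hC⟩ := exists_le_mul_pow_of_limsup_rpow_inv_lt
    (fun n => natCast_ne_top (C n).ncard) (pow_ne_top hxt) hx
  obtain ⟨MD, hMD, hD⟩ := exists_le_mul_pow_of_limsup_rpow_inv_lt
    (fun n => natCast_ne_top (D n).ncard) (pow_ne_top hyt) hy
  refine limsup_rpow_inv_le_of_le_mul_pow (mul_ne_top hMC hMD) fun n => ?_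
  let a : ℕ → ℝ≥0∞ := fun k => n.choose k * x ^ k * y ^ (n - k)
  calc ((mergeSet C D n).ncard : ℝ≥0∞)
      ≤ ∑ k ∈ Finset.range (n + 1),
          (n.choose k ^ 2 * ((C k).ncard * (D (n - k)).ncard) : ℝ≥0∞) := by
        exact_mod_cast ncard_mergeSet_le C D n
    _ ≤ ∑ k ∈ Finset.range (n + 1), MC * MD * a k ^ 2 := by
        refine Finset.sum_le_sum fun k _ => ?_
        calc _ ≤ (n.choose k ^ 2 * ((MC * (x ^ 2) ^ k) * (MD * (y ^ 2) ^ (n - k))) : ℝ≥0∞) := by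
              gcongr; exacts [hC k, hD (n - k)]
          _ = MC * MD * a k ^ 2 := by ring
    _ ≤ MC * MD * (∑ k ∈ Finset.range (n + 1), a k) ^ 2 := by
        rw [← Finset.mul_sum]
        gcongr
        exact Finset.sum_sq_le_sq_sum_of_nonneg fun _ _ => zero_le
    _ = MC * MD * ((x + y) ^ n) ^ 2 := by
        rw [add_pow]
        congr 2
        exact Finset.sum_congr rfl fun k _ => by ring
    _ = MC * MD * ((x + y) ^ 2) ^ n := by rw [← pow_mul, ← pow_mul, mul_comm n 2]

theorem merge_upper_growth_le_general (C D : PermClass) :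
    ugr (mergeSet C.mem D.mem) ≤
      (ugr C.mem ^ (2⁻¹ : ℝ) + ugr D.mem ^ (2⁻¹ : ℝ)) ^ 2 := by
  set a := ugr C.mem ^ (2⁻¹ : ℝ)
  set b := ugr D.mem ^ (2⁻¹ : ℝ)
  rcases eq_or_ne a ⊤ with ha | ha
  · simp [ha]
  rcases eq_or_ne b ⊤ with hb | hb
  · simp [hb]
  have hlim : Tendsto (fun j : ℕ => (a + (j : ℝ≥0∞)⁻¹ + (b + (j : ℝ≥0∞)⁻¹)) ^ 2) atTop
      (𝓝 ((a + b) ^ 2)) := by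
    have h := ENNReal.tendsto_inv_nat_nhds_zero
    simpa [Function.comp_def] using ((ENNReal.continuous_pow 2).tendsto _).comp
      ((h.const_add a).add (h.const_add b))
  have hsq : ∀ {c z : ℝ≥0∞}, c ^ (2⁻¹ : ℝ) < z → c < z ^ 2 := fun h => by
    simpa using (ENNReal.rpow_inv_lt_iff two_pos).1 h
  have hinv : ∀ j : ℕ, (j : ℝ≥0∞)⁻¹ ≠ 0 := fun j => ENNReal.inv_ne_zero.2 (natCast_ne_top j)
  refine ge_of_tendsto' hlim fun j => ugr_mergeSet_le (hsq ?_) (hsq ?_)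
  · exact ENNReal.lt_add_right ha (hinv j)
  · exact ENNReal.lt_add_right hb (hinv j)

/-- If the upper growth rates of `C` and `D` are finite, then
`limsup |(C⊙D)_n|^(1/n) ≤ (√(limsup |C_n|^(1/n)) + √(limsup |D_n|^(1/n)))²`. -/
theorem merge_upper_growth_le (C D : PermClass)
    (hC : ugr C.mem ≠ ⊤) (hD : ugr D.mem ≠ ⊤) :
    ugr (mergeSet C.mem D.mem) ≤
      (ugr C.mem ^ (2⁻¹ : ℝ) + ugr D.mem ^ (2⁻¹ : ℝ)) ^ 2 :=
  merge_upper_growth_le_general C D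
end

section
/- Let C and D be permutation classes and let m be a natural number such that every permutation lying in both C and D has length at most m. Then for every natural number n, Σ_{i=0}^{n} (n choose i)² · |C_i| · |D_{n-i}| ≤ |(C⊙D)_n| · Σ_{i=0}^{2m} (n choose i). -/
open Filter Topology ENNReal

/-!
Call a set `A` of positions a splitting of `π` if `π` restricted to `A` lies in `C` and `π`
restricted to the complement of `A` lies in `D`; we count pairs `(π, A)` in two ways.
A permutation with a splitting `A` of size `i` is recovered from `A`, its image `π(A)` and the
two restricted patterns, and every such datum occurs, so there are at least
`∑ (n choose i)² |C_i| |D_{n-i}|` pairs. On the other hand, if `A` and `A₀` are splittings of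
the same `π`, then `π` restricted to `A \ A₀` lies in both `C` and `D`, so `|A \ A₀| ≤ m`;
hence `A ↦ A ∆ A₀` injects the splittings of `π` into the sets of size at most `2m`.
-/

open Finset

noncomputable def patternOf {α : Type*} [LinearOrder α] {j : ℕ} (u : Fin j → α)
    (hu : Function.Injective u) : Perm j :=
  (Equiv.ofInjective u hu).trans
    (Fintype.orderIsoFinOfCardEq (Set.range u)
      ((Set.card_range_of_injective hu).trans (Fintype.card_fin j))).symm.toEquiv

lemma patternOf_lt_patternOf {α : Type*} [LinearOrder α] {j : ℕ} {u : Fin j → α}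
    (hu : Function.Injective u) {a b : Fin j} :
    patternOf u hu a < patternOf u hu b ↔ u a < u b :=
  OrderIso.lt_iff_lt _

lemma SubpermIn.mono {n : ℕ} {π : Perm n} {A B : Set (Fin n)} {C : PermClass}
    (hA : SubpermIn π A C.mem) (hBA : B ⊆ A) : SubpermIn π B C.mem := by
  classical
  obtain ⟨k, σ, f, rfl, hσπ, hσ⟩ := hA
  let g := (univ.filter (f · ∈ B)).orderEmbOfFin rfl
  have hσg : Function.Injective (σ ∘ g) := σ.injective.comp g.injective
  refine ⟨_, patternOf _ hσg, g.trans f, ?_, fun a b => patternOf_lt_patternOf hσg |>.trans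
    (hσπ _ _), C.closed _ σ hσ ⟨g, fun a b => patternOf_lt_patternOf hσg⟩⟩
  rw [RelEmbedding.coe_trans, Set.range_comp, range_orderEmbOfFin, coe_filter]
  simp only [mem_univ, true_and]
  exact Set.image_preimage_eq_of_subset hBA

lemma SubpermIn.ncard_le {n : ℕ} {π : Perm n} {B : Set (Fin n)} {C : PermClass}
    {D : ∀ k, Set (Perm k)} {m : ℕ} (h : ∀ (k : ℕ) (σ : Perm k), σ ∈ C.mem k → σ ∈ D k → k ≤ m)
    (hC : SubpermIn π B C.mem) (hD : SubpermIn π B D) : B.ncard ≤ m := by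
  obtain ⟨k, σ, f, rfl, hσπ, hσ⟩ := hC
  obtain ⟨k', σ', f', hff', hσ'π, hσ'⟩ := hD
  have hcard : ∀ {j} (e : Fin j ↪o Fin n), (Set.range e).ncard = j := fun e => by
    rw [Set.ncard_range_of_injective e.injective, Nat.card_eq_fintype_card, Fintype.card_fin]
  obtain rfl : k' = k := by rw [← hcard f, ← hcard f', hff']
  obtain rfl : f' = f := OrderEmbedding.range_inj.1 hff'
  rw [hcard]
  refine h _ σ' (C.closed σ' σ hσ ⟨RelEmbedding.refl _, fun a b => ?_⟩) hσ'
  exact (hσ'π a b).trans (hσπ a b).symm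

section Interleave

variable {n i : ℕ} {P V : Finset (Fin n)}

lemma card_compl_of_card_eq (h : #P = i) : #Pᶜ = n - i := by
  rw [card_compl, h, Fintype.card_fin]

noncomputable def interleave (hP : #P = i) (hV : #V = i) (σ : Perm i) (τ : Perm (n - i)) :
    Perm n :=
  (finSumEquivOfFinset hP (card_compl_of_card_eq hP)).symm.trans
    ((σ.sumCongr τ).trans (finSumEquivOfFinset hV (card_compl_of_card_eq hV)))

variable (hP : #P = i) (hV : #V = i) (σ : Perm i) (τ : Perm (n - i))

lemma interleave_orderEmbOfFin (a : Fin i) :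
    interleave hP hV σ τ (P.orderEmbOfFin hP a) = V.orderEmbOfFin hV (σ a) := by
  rw [← finSumEquivOfFinset_inl hP (card_compl_of_card_eq hP), interleave, Equiv.trans_apply,
    Equiv.symm_apply_apply, Equiv.trans_apply, Equiv.sumCongr_apply, Sum.map_inl,
    finSumEquivOfFinset_inl]

lemma interleave_orderEmbOfFin_compl (a : Fin (n - i)) :
    interleave hP hV σ τ (Pᶜ.orderEmbOfFin (card_compl_of_card_eq hP) a) =
      Vᶜ.orderEmbOfFin (card_compl_of_card_eq hV) (τ a) := by
  rw [← finSumEquivOfFinset_inr hP (card_compl_of_card_eq hP), interleave, Equiv.trans_apply,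
    Equiv.symm_apply_apply, Equiv.trans_apply, Equiv.sumCongr_apply, Sum.map_inr,
    finSumEquivOfFinset_inr]

lemma image_interleave : P.image (interleave hP hV σ τ) = V := by
  refine eq_of_subset_of_card_le (fun x hx => ?_) ?_
  · obtain ⟨y, hy, rfl⟩ := mem_image.1 hx
    obtain ⟨a, rfl⟩ : y ∈ Set.range (P.orderEmbOfFin hP) := by
      rwa [range_orderEmbOfFin]
    rw [interleave_orderEmbOfFin]
    exact orderEmbOfFin_mem V hV (σ a)
  · rw [card_image_of_injective _ (interleave hP hV σ τ).injective, hP, hV]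

lemma subpermIn_interleave {F : ∀ k, Set (Perm k)} (hσ : σ ∈ F i) :
    SubpermIn (interleave hP hV σ τ) P F := by
  refine ⟨i, σ, P.orderEmbOfFin hP, range_orderEmbOfFin P hP, fun a b => ?_, hσ⟩
  rw [interleave_orderEmbOfFin, interleave_orderEmbOfFin, OrderEmbedding.lt_iff_lt]

lemma subpermIn_compl_interleave {F : ∀ k, Set (Perm k)} (hτ : τ ∈ F (n - i)) :
    SubpermIn (interleave hP hV σ τ) (↑P)ᶜ F := by
  refine ⟨n - i, τ, Pᶜ.orderEmbOfFin (card_compl_of_card_eq hP), by simp, fun a b => ?_, hτ⟩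
  rw [interleave_orderEmbOfFin_compl, interleave_orderEmbOfFin_compl, OrderEmbedding.lt_iff_lt]

lemma interleave_inj {V' : Finset (Fin n)} {hV' : #V' = i} {σ' : Perm i} {τ' : Perm (n - i)}
    (h : interleave hP hV σ τ = interleave hP hV' σ' τ') : V = V' ∧ σ = σ' ∧ τ = τ' := by
  obtain rfl : V = V' := by
    rw [← image_interleave hP hV σ τ, ← image_interleave hP hV' σ' τ', h]
  refine ⟨rfl, Equiv.ext fun a => (V.orderEmbOfFin hV).injective ?_,
    Equiv.ext fun a => (Vᶜ.orderEmbOfFin (card_compl_of_card_eq hV)).injective ?_⟩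
  · rw [← interleave_orderEmbOfFin hP hV, h, interleave_orderEmbOfFin hP hV']
  · rw [← interleave_orderEmbOfFin_compl hP hV, h, interleave_orderEmbOfFin_compl hP hV']

end Interleave

open scoped Classical in
noncomputable def splittings {n : ℕ} (F G : ∀ k, Set (Perm k)) (π : Perm n) :
    Finset (Finset (Fin n)) :=
  {A | SubpermIn π A F ∧ SubpermIn π (↑A)ᶜ G}

lemma mem_splittings {n : ℕ} {F G : ∀ k, Set (Perm k)} {π : Perm n} {A : Finset (Fin n)} :
    A ∈ splittings F G π ↔ SubpermIn π A F ∧ SubpermIn π (↑A)ᶜ G := by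
  classical
  simp [splittings]

open scoped Classical in
lemma choose_mul_ncard_mul_ncard_le_card {n i : ℕ} (F G : ∀ k, Set (Perm k))
    {P : Finset (Fin n)} (hP : #P = i) :
    n.choose i * (F i).ncard * (G (n - i)).ncard ≤ #{π | P ∈ splittings F G π} := by
  calc n.choose i * (F i).ncard * (G (n - i)).ncard
      = #((univ : Finset {V : Finset (Fin n) // #V = i}) ×ˢ (F i).toFinset ×ˢ
          (G (n - i)).toFinset) := by
        simp only [card_product, card_univ, Fintype.card_finset_len, Fintype.card_fin,
          Set.ncard_eq_toFinset_card', mul_assoc]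
    _ ≤ _ := by
        refine card_le_card_of_injOn (fun x => interleave hP x.1.2 x.2.1 x.2.2) ?_ ?_
        · rintro ⟨V, σ, τ⟩ hx
          simp only [mem_coe, mem_product, Set.mem_toFinset, mem_univ, true_and] at hx
          simpa [mem_splittings] using
            ⟨subpermIn_interleave hP V.2 σ τ hx.1, subpermIn_compl_interleave hP V.2 σ τ hx.2⟩
        · rintro ⟨V, σ, τ⟩ - ⟨V', σ', τ'⟩ - h
          obtain ⟨hVV', rfl, rfl⟩ := interleave_inj hP V.2 σ τ h
          rw [Subtype.ext hVV']

lemma sum_choose_sq_mul_le_sum_card_splittings (F G : ∀ k, Set (Perm k)) (n : ℕ) :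
    ∑ i ∈ range (n + 1), n.choose i ^ 2 * (F i).ncard * (G (n - i)).ncard ≤
      ∑ π : Perm n, #(splittings F G π) := by
  classical
  calc ∑ i ∈ range (n + 1), n.choose i ^ 2 * (F i).ncard * (G (n - i)).ncard
      = ∑ P : Finset (Fin n), n.choose #P * (F #P).ncard * (G (n - #P)).ncard := by
        rw [← powerset_univ,
          sum_powerset_apply_card fun k => n.choose k * (F k).ncard * (G (n - k)).ncard,
          card_univ, Fintype.card_fin]
        simp only [smul_eq_mul, sq, mul_assoc]
    _ ≤ ∑ P : Finset (Fin n), #{π | P ∈ splittings F G π} :=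
        sum_le_sum fun P _ => choose_mul_ncard_mul_ncard_le_card F G rfl
    _ = ∑ π : Perm n, #(splittings F G π) := by
        simpa [bipartiteAbove, bipartiteBelow] using
          sum_card_bipartiteAbove_eq_sum_card_bipartiteBelow (s := univ) (t := univ)
            (fun P (π : Perm n) => P ∈ splittings F G π)

open scoped symmDiff

section SplittingsOfMerge

variable {C D : PermClass} {m n : ℕ} {π : Perm n}

lemma card_sdiff_le_of_mem_splittings
    (h : ∀ (k : ℕ) (π : Perm k), π ∈ C.mem k → π ∈ D.mem k → k ≤ m) {A B : Finset (Fin n)}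
    (hA : A ∈ splittings C.mem D.mem π) (hB : B ∈ splittings C.mem D.mem π) : #(A \ B) ≤ m := by
  rw [mem_splittings] at hA hB
  have hC : SubpermIn π ↑(A \ B) C.mem := hA.1.mono (by simp)
  have hD : SubpermIn π ↑(A \ B) D.mem := hB.2.mono (by simp)
  rw [← Set.ncard_coe_finset]
  exact hC.ncard_le h hD

lemma card_splittings_le (h : ∀ (k : ℕ) (π : Perm k), π ∈ C.mem k → π ∈ D.mem k → k ≤ m) :
    #(splittings C.mem D.mem π) ≤ ∑ i ∈ range (2 * m + 1), n.choose i := by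
  classical
  obtain he | ⟨A₀, hA₀⟩ := (splittings C.mem D.mem π).eq_empty_or_nonempty
  · simp [he]
  calc #(splittings C.mem D.mem π)
      ≤ #((range (2 * m + 1)).biUnion fun i => powersetCard i (univ : Finset (Fin n))) := by
        refine card_le_card_of_injOn (· ∆ A₀) (fun A hA => ?_)
          (fun A _ B _ hAB => symmDiff_left_injective A₀ hAB)
        have hcard : #(A ∆ A₀) ≤ 2 * m := calc
          #(A ∆ A₀) ≤ #(A \ A₀) + #(A₀ \ A) := by
            rw [symmDiff_def]
            exact card_union_le _ _
          _ ≤ 2 * m := by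
            have := card_sdiff_le_of_mem_splittings h hA hA₀
            have := card_sdiff_le_of_mem_splittings h hA₀ hA
            omega
        simpa [Nat.lt_succ_iff] using hcard
    _ ≤ ∑ i ∈ range (2 * m + 1), n.choose i := by
        refine card_biUnion_le.trans_eq (sum_congr rfl fun i _ => ?_)
        rw [card_powersetCard, card_univ, Fintype.card_fin]

end SplittingsOfMerge

lemma mem_mergeSet_of_mem_splittings {n : ℕ} {F G : ∀ k, Set (Perm k)} {π : Perm n}
    {A : Finset (Fin n)} (hA : A ∈ splittings F G π) : π ∈ mergeSet F G n :=
  ⟨A, mem_splittings.1 hA⟩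

/-- If every permutation lying in both `C` and `D` has length at most `m`,
then `∑_{i=0}^{n} (n choose i)² |C_i| |D_{n-i}| ≤ |(C⊙D)_n| · ∑_{i=0}^{2m} (n choose i)`. -/
theorem sum_le_merge_count_mul (C D : PermClass) (m : ℕ)
    (h : ∀ (k : ℕ) (π : Perm k), π ∈ C.mem k → π ∈ D.mem k → k ≤ m) (n : ℕ) :
    ∑ i ∈ Finset.range (n + 1),
        n.choose i ^ 2 * (C.mem i).ncard * (D.mem (n - i)).ncard ≤
      (mergeSet C.mem D.mem n).ncard * ∑ i ∈ Finset.range (2 * m + 1), n.choose i := by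
  classical
  have hsupport : ∀ π ∉ (mergeSet C.mem D.mem n).toFinset, #(splittings C.mem D.mem π) = 0 :=
    fun π hπ => card_eq_zero.2 <| eq_empty_of_forall_notMem fun A hA =>
      hπ (Set.mem_toFinset.2 (mem_mergeSet_of_mem_splittings hA))
  calc ∑ i ∈ range (n + 1), n.choose i ^ 2 * (C.mem i).ncard * (D.mem (n - i)).ncard
      ≤ ∑ π : Perm n, #(splittings C.mem D.mem π) :=
        sum_choose_sq_mul_le_sum_card_splittings C.mem D.mem n
    _ = ∑ π ∈ (mergeSet C.mem D.mem n).toFinset, #(splittings C.mem D.mem π) :=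
        (sum_subset (subset_univ _) fun π _ => hsupport π).symm
    _ ≤ (mergeSet C.mem D.mem n).ncard * ∑ i ∈ range (2 * m + 1), n.choose i := by
        rw [Set.ncard_eq_toFinset_card']
        exact sum_le_card_nsmul _ _ _ fun π _ => card_splittings_le h
end

section
/- If C is a sum closed permutation class, then |C_{m+n}| ≥ |C_m| · |C_n| for all natural numbers m and n, and consequently the sequence |C_n|^{1/n} converges (in the extended nonnegative reals [0,∞]) to sup_{n≥1} |C_n|^{1/n}; that is, every sum closed permutation class has a proper growth rate. -/
open Filter Topology ENNReal

/-!
Since `⊕` is injective, `(π, σ) ↦ π ⊕ σ` embeds `C_m × C_n` into `C_{m+n}`. If `C_1` is empty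
then so is every `C_n` with `n ≥ 1`, as every nonempty permutation contains `1`. Otherwise
every `C_n` is nonempty, and Fekete's argument applies to `a n = |C_n|`: writing
`n = q m + r`, supermultiplicativity gives `a n ≥ a m ^ q`, whose `n`-th root tends to
`a m ^ (1 / m)`; hence `liminf a n ^ (1 / n) ≥ sup_m a m ^ (1 / m) ≥ limsup a n ^ (1 / n)`.
-/

theorem pattern_of_le_one {k n : ℕ} (σ : Perm k) (π : Perm n) (hk : k ≤ 1) (hkn : k ≤ n) :
    Pattern σ π := by
  have : Subsingleton (Fin k) := Fin.subsingleton_iff_le_one.2 hk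
  exact ⟨Fin.castLEOrderEmb hkn, fun i j => by simp [Subsingleton.elim i j]⟩

theorem dsum_injective {m n : ℕ} :
    Function.Injective (fun p : Perm m × Perm n => dsum p.1 p.2) :=
  (Equiv.permCongr finSumFinEquiv).injective.comp Equiv.Perm.sumCongrHom_injective

theorem SumClosed.ncard_mul_ncard_le {F : ∀ m, Set (Perm m)} (hF : SumClosed F) (m n : ℕ) :
    (F m).ncard * (F n).ncard ≤ (F (m + n)).ncard :=
  calc (F m).ncard * (F n).ncard
      = ((fun p : Perm m × Perm n => dsum p.1 p.2) '' (F m ×ˢ F n)).ncard := by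
        rw [Set.ncard_image_of_injective _ dsum_injective, Set.ncard_prod]
    _ ≤ (F (m + n)).ncard :=
        Set.ncard_le_ncard (Set.image_subset_iff.2 fun p hp => hF _ _ hp.1 hp.2) (Set.toFinite _)

namespace PermClass

theorem mem_eq_empty_of_mem_one_eq_empty (C : PermClass) (h1 : C.mem 1 = ∅) {n : ℕ}
    (hn : 1 ≤ n) : C.mem n = ∅ :=
  Set.eq_empty_of_forall_notMem fun π hπ =>
    h1.subset (C.closed 1 π hπ (pattern_of_le_one _ _ le_rfl hn))

theorem mem_nonempty_of_mem_one_nonempty (C : PermClass) (hC : SumClosed C.mem)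
    (h1 : (C.mem 1).Nonempty) (n : ℕ) : (C.mem n).Nonempty := by
  obtain ⟨τ, hτ⟩ := h1
  induction n with
  | zero => exact ⟨1, C.closed 1 τ hτ (pattern_of_le_one _ _ zero_le_one zero_le_one)⟩
  | succ n ih =>
    obtain ⟨π, hπ⟩ := ih
    exact ⟨dsum π τ, hC π τ hπ hτ⟩

theorem eGrowthSeq_eq_zero_of_mem_one_eq_empty (C : PermClass) (h1 : C.mem 1 = ∅) {n : ℕ}
    (hn : 1 ≤ n) : eGrowthSeq C.mem n = 0 := by
  rw [eGrowthSeq, C.mem_eq_empty_of_mem_one_eq_empty h1 hn, Set.ncard_empty, Nat.cast_zero]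
  exact ENNReal.zero_rpow_of_pos (inv_pos.2 (Nat.cast_pos.2 hn))

end PermClass

theorem ENNReal.tendsto_const_rpow {α : Type*} {l : Filter α} {c : ℝ≥0∞} (hc₀ : c ≠ 0)
    (hc : c ≠ ∞) {e : α → ℝ} {y : ℝ} (he : Tendsto e l (𝓝 y)) :
    Tendsto (fun x => c ^ e x) l (𝓝 (c ^ y)) := by
  lift c to NNReal using hc
  have hc₀' : c ≠ 0 := by exact_mod_cast hc₀
  simp only [← ENNReal.coe_rpow_of_ne_zero hc₀']
  exact ENNReal.tendsto_coe.2 (tendsto_const_nhds.nnrpow he (Or.inl hc₀'))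

theorem tendsto_natCast_div_div_atTop (m : ℕ) :
    Tendsto (fun n : ℕ => ((n / m : ℕ) : ℝ) / n) atTop (𝓝 (m : ℝ)⁻¹) := by
  have h := (tendsto_nat_floor_mul_div_atTop (inv_nonneg.2 (Nat.cast_nonneg (α := ℝ) m))).comp
    tendsto_natCast_atTop_atTop
  refine h.congr fun n => ?_
  rw [Function.comp_apply, inv_mul_eq_div, Nat.floor_div_eq_div]

section Supermultiplicative

variable {a : ℕ → ℕ}

theorem pow_le_of_supermultiplicative (hmul : ∀ m n, a m * a n ≤ a (m + n)) (h0 : 0 < a 0)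
    (m q : ℕ) : a m ^ q ≤ a (m * q) := by
  induction q with
  | zero => rw [pow_zero, mul_zero]; exact h0
  | succ q ih =>
    calc a m ^ (q + 1) = a m ^ q * a m := pow_succ _ _
      _ ≤ a (m * q) * a m := Nat.mul_le_mul_right _ ih
      _ ≤ a (m * (q + 1)) := hmul _ _

theorem pow_div_le_of_supermultiplicative (hmul : ∀ m n, a m * a n ≤ a (m + n))
    (hpos : ∀ n, 0 < a n) (m n : ℕ) : a m ^ (n / m) ≤ a n :=
  calc a m ^ (n / m) ≤ a (m * (n / m)) := pow_le_of_supermultiplicative hmul (hpos 0) _ _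
    _ ≤ a (m * (n / m)) * a (n % m) := Nat.le_mul_of_pos_right _ (hpos _)
    _ ≤ a n := (hmul _ _).trans_eq (congrArg a (Nat.div_add_mod n m))

theorem rpow_inv_le_liminf_of_supermultiplicative (hmul : ∀ m n, a m * a n ≤ a (m + n))
    (hpos : ∀ n, 0 < a n) (m : ℕ) :
    (a m : ℝ≥0∞) ^ (m : ℝ)⁻¹ ≤ liminf (fun n => (a n : ℝ≥0∞) ^ (n : ℝ)⁻¹) atTop := by
  have hlim := ENNReal.tendsto_const_rpow (c := (a m : ℝ≥0∞)) (by simpa using (hpos m).ne')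
    (ENNReal.natCast_ne_top _) (tendsto_natCast_div_div_atTop m)
  rw [← hlim.liminf_eq]
  refine liminf_le_liminf (Eventually.of_forall fun n => ?_)
  calc (a m : ℝ≥0∞) ^ (((n / m : ℕ) : ℝ) / n) = ((a m : ℝ≥0∞) ^ (n / m)) ^ (n : ℝ)⁻¹ := by
        rw [div_eq_mul_inv, ENNReal.rpow_mul, ENNReal.rpow_natCast]
    _ ≤ (a n : ℝ≥0∞) ^ (n : ℝ)⁻¹ := by
        gcongr
        exact_mod_cast pow_div_le_of_supermultiplicative hmul hpos m n

theorem tendsto_rpow_inv_iSup_of_supermultiplicative (hmul : ∀ m n, a m * a n ≤ a (m + n))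
    (hpos : ∀ n, 0 < a n) :
    Tendsto (fun n => (a n : ℝ≥0∞) ^ (n : ℝ)⁻¹) atTop
      (𝓝 (⨆ n : ℕ, ⨆ _ : 1 ≤ n, (a n : ℝ≥0∞) ^ (n : ℝ)⁻¹)) :=
  tendsto_of_le_liminf_of_limsup_le
    (iSup₂_le fun m _ => rpow_inv_le_liminf_of_supermultiplicative hmul hpos m)
    (limsup_le_of_le (by isBoundedDefault) ((eventually_ge_atTop 1).mono fun n hn =>
      le_iSup₂ (f := fun n (_ : 1 ≤ n) => (a n : ℝ≥0∞) ^ (n : ℝ)⁻¹) n hn))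

end Supermultiplicative

/-- If `C` is sum closed, then `|C_{m+n}| ≥ |C_m| · |C_n|` for all `m, n`,
and consequently `|C_n|^(1/n)` converges in `[0,∞]` to `sup_{n ≥ 1} |C_n|^(1/n)`;
that is, every sum closed permutation class has a proper growth rate. -/
theorem sumClosed_supermultiplicative_and_growth (C : PermClass) (h : SumClosed C.mem) :
    (∀ m n : ℕ, (C.mem m).ncard * (C.mem n).ncard ≤ (C.mem (m + n)).ncard) ∧
      Tendsto (eGrowthSeq C.mem) atTop
        (𝓝 (⨆ n : ℕ, ⨆ _ : 1 ≤ n, eGrowthSeq C.mem n)) := by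
  refine ⟨h.ncard_mul_ncard_le, ?_⟩
  rcases (C.mem 1).eq_empty_or_nonempty with h1 | h1
  · have hzero : ∀ n, 1 ≤ n → eGrowthSeq C.mem n = 0 := fun n hn =>
      C.eGrowthSeq_eq_zero_of_mem_one_eq_empty h1 hn
    rw [nonpos_iff_eq_zero.1 (iSup₂_le fun n hn => (hzero n hn).le)]
    exact tendsto_const_nhds.congr' ((eventually_ge_atTop 1).mono fun n hn => (hzero n hn).symm)
  · exact tendsto_rpow_inv_iSup_of_supermultiplicative h.ncard_mul_ncard_le fun n =>
      (Set.ncard_pos (Set.toFinite _)).2 (C.mem_nonempty_of_mem_one_nonempty h h1 n)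
end

section
/- The infinite increasing (Av(21), E) staircase, where E = Av(12, 21) is the class consisting of the empty permutation and the permutation 1, is equal to the class Av(321, 4123). -/
open Filter Topology ENNReal

/-- The permutation `4123`. -/
def p4123 : Perm 4 := (finRotate 4).symm
section Aux
variable {n : ℕ}

private def fin2fun {α : Type*} (x0 x1 : α) : Fin 2 → α :=
  fun a => if a.val = 0 then x0 else x1

private def fin3fun {α : Type*} (x0 x1 x2 : α) : Fin 3 → α :=
  fun a => if a.val = 0 then x0 else if a.val = 1 then x1 else x2

private def fin4fun {α : Type*} (x0 x1 x2 x3 : α) : Fin 4 → α :=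
  fun a => if a.val = 0 then x0 else if a.val = 1 then x1 else if a.val = 2 then x2 else x3

private def emb1 {m : ℕ} (i : Fin m) : Fin 1 ↪o Fin m :=
  OrderEmbedding.ofStrictMono (fun _ => i) (by
    intro a b hab; rw [Fin.lt_def] at hab; have := a.isLt; have := b.isLt; omega)

private def emb2 {m : ℕ} {i j : Fin m} (h : i < j) : Fin 2 ↪o Fin m :=
  OrderEmbedding.ofStrictMono (fin2fun i j) (by
    intro a b hab
    have ha := a.isLt; have hb := b.isLt
    rw [Fin.lt_def] at hab
    unfold fin2fun
    split_ifs <;> first | assumption | omega)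

@[simp] private lemma emb2_apply0 {m : ℕ} {i j : Fin m} (h : i < j) : emb2 h 0 = i := rfl
@[simp] private lemma emb2_apply1 {m : ℕ} {i j : Fin m} (h : i < j) : emb2 h 1 = j := rfl

lemma pattern_delta3_elim {π : Perm n} (h : Pattern (delta 3) π) :
    ∃ x0 x1 x2 : Fin n, x0 < x1 ∧ x1 < x2 ∧ π x2 < π x1 ∧ π x1 < π x0 := by
  obtain ⟨f, hf⟩ := h
  exact ⟨f 0, f 1, f 2, f.strictMono (by decide), f.strictMono (by decide),
    (hf 2 1).mp (by decide), (hf 1 0).mp (by decide)⟩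

lemma pattern_p4123_elim {π : Perm n} (h : Pattern p4123 π) :
    ∃ x0 x1 x2 x3 : Fin n, x0 < x1 ∧ x1 < x2 ∧ x2 < x3 ∧
      π x1 < π x2 ∧ π x2 < π x3 ∧ π x3 < π x0 := by
  obtain ⟨f, hf⟩ := h
  exact ⟨f 0, f 1, f 2, f 3, f.strictMono (by decide), f.strictMono (by decide),
    f.strictMono (by decide), (hf 1 2).mp (by decide), (hf 2 3).mp (by decide),
    (hf 3 0).mp (by decide)⟩

lemma pattern_delta3_intro {π : Perm n} {x0 x1 x2 : Fin n} (h01 : x0 < x1) (h12 : x1 < x2)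
    (v21 : π x2 < π x1) (v10 : π x1 < π x0) : Pattern (delta 3) π := by
  have h02 : x0 < x2 := lt_trans h01 h12
  refine ⟨OrderEmbedding.ofStrictMono (fin3fun x0 x1 x2) ?_, ?_⟩
  · intro a b hab
    have ha := a.isLt; have hb := b.isLt
    rw [Fin.lt_def] at hab
    unfold fin3fun
    split_ifs <;> first | assumption | omega
  · have hδ : ∀ x : Fin 3, ((delta 3) x).val = 2 - x.val := by decide
    intro i j
    have hi := i.isLt; have hj := j.isLt
    show delta 3 i < delta 3 j ↔ π (fin3fun x0 x1 x2 i) < π (fin3fun x0 x1 x2 j)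
    rw [Fin.lt_def, Fin.lt_def, hδ, hδ]
    rw [Fin.lt_def] at v21 v10 h02
    unfold fin3fun
    split_ifs <;> omega

end Aux
section Aux2
variable {n : ℕ}

lemma pattern_p4123_intro {π : Perm n} {x0 x1 x2 x3 : Fin n} (h01 : x0 < x1) (h12 : x1 < x2)
    (h23 : x2 < x3) (v12 : π x1 < π x2) (v23 : π x2 < π x3) (v30 : π x3 < π x0) :
    Pattern p4123 π := by
  have h02 : x0 < x2 := lt_trans h01 h12
  have h13 : x1 < x3 := lt_trans h12 h23
  have h03 : x0 < x3 := lt_trans h01 h13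
  refine ⟨OrderEmbedding.ofStrictMono (fin4fun x0 x1 x2 x3) ?_, ?_⟩
  · intro a b hab
    have ha := a.isLt; have hb := b.isLt
    rw [Fin.lt_def] at hab
    unfold fin4fun
    split_ifs <;> first | assumption | omega
  · have hp : ∀ x : Fin 4, (p4123 x).val = if x.val = 0 then 3 else x.val - 1 := by decide
    intro i j
    have hi := i.isLt; have hj := j.isLt
    show p4123 i < p4123 j ↔ π (fin4fun x0 x1 x2 x3 i) < π (fin4fun x0 x1 x2 x3 j)
    rw [Fin.lt_def, Fin.lt_def, hp, hp]
    rw [Fin.lt_def] at v12 v23 v30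
    unfold fin4fun
    split_ifs <;> omega

lemma pattern_delta2_intro {m : ℕ} {σ : Perm m} {i j : Fin m} (hij : i < j)
    (hv : σ j < σ i) : Pattern (delta 2) σ := by
  refine ⟨emb2 hij, ?_⟩
  have hδ : ∀ x : Fin 2, ((delta 2) x).val = 1 - x.val := by decide
  intro a b
  have ha := a.isLt; have hb := b.isLt
  show delta 2 a < delta 2 b ↔ σ (fin2fun i j a) < σ (fin2fun i j b)
  rw [Fin.lt_def, Fin.lt_def, hδ, hδ]
  rw [Fin.lt_def] at hv
  unfold fin2fun
  split_ifs <;> omega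

lemma pattern_12_intro {m : ℕ} {σ : Perm m} {i j : Fin m} (hij : i < j)
    (hv : σ i < σ j) : Pattern (1 : Perm 2) σ := by
  refine ⟨emb2 hij, ?_⟩
  intro a b
  have ha := a.isLt; have hb := b.isLt
  show (1 : Perm 2) a < (1 : Perm 2) b ↔ σ (fin2fun i j a) < σ (fin2fun i j b)
  have h1 : ∀ x : Fin 2, ((1 : Perm 2) x).val = x.val := by decide
  rw [Fin.lt_def, Fin.lt_def, h1, h1]
  rw [Fin.lt_def] at hv
  unfold fin2fun
  split_ifs <;> omega

/-- identity avoids 21 -/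
lemma one_avoids_delta2 (m : ℕ) : ¬ Pattern (delta 2) (1 : Perm m) := by
  rintro ⟨f, hf⟩
  have := (hf 1 0).mp (by decide)
  simp only [Equiv.Perm.coe_one, id_eq] at this
  exact absurd (f.strictMono (show (0:Fin 2) < 1 by decide)) (asymm this)

/-- Perm 1 avoids any pattern of length 2 -/
lemma perm1_avoids_len2 (τ : Perm 2) : ¬ Pattern τ (1 : Perm 1) := by
  rintro ⟨f, hf⟩
  have h01 := f.strictMono (show (0:Fin 2) < 1 by decide)
  have := (f 0).isLt; have := (f 1).isLt
  rw [Fin.lt_def] at h01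
  omega

end Aux2
section Aux3
open Finset
variable {n : ℕ}

/-- `p` is a left-to-right maximum of `π`. -/
def LRm (π : Perm n) (p : Fin n) : Prop := ∀ q, q < p → π q < π p

instance {π : Perm n} : DecidablePred (LRm π) := fun _ => by unfold LRm; infer_instance

/-- number of non-LR-maxima strictly before `p`. -/
def aIdx (π : Perm n) (p : Fin n) : ℕ :=
  (univ.filter (fun q => ¬ LRm π q ∧ q < p)).card

/-- number of non-LR-maxima with value below `π p`. -/
def bIdx (π : Perm n) (p : Fin n) : ℕ :=
  (univ.filter (fun q => ¬ LRm π q ∧ π q < π p)).card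

def colIdx (π : Perm n) (p : Fin n) : ℕ :=
  if LRm π p then min (aIdx π p + 1) (bIdx π p) else aIdx π p + 1

def rowIdx (π : Perm n) (p : Fin n) : ℕ :=
  if LRm π p then min (aIdx π p + 1) (bIdx π p) else aIdx π p

variable {π : Perm n}

lemma not_LRm_iff {p : Fin n} : ¬ LRm π p ↔ ∃ q, q < p ∧ π p < π q := by
  unfold LRm
  push_neg
  constructor
  · rintro ⟨q, hq1, hq2⟩
    exact ⟨q, hq1, lt_of_le_of_ne hq2 (fun h => (ne_of_lt hq1) (π.injective h.symm))⟩
  · rintro ⟨q, hq1, hq2⟩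
    exact ⟨q, hq1, le_of_lt hq2⟩

lemma LR_lt {p p' : Fin n} (hp' : LRm π p') (h : p < p') : π p < π p' := hp' p h

lemma nonLR_lt (h321 : ¬ Pattern (delta 3) π) {p p' : Fin n}
    (hp : ¬ LRm π p) (hp' : ¬ LRm π p') (hpp : p < p') : π p < π p' := by
  by_contra hc
  have hne : π p' ≠ π p := fun h => (ne_of_lt hpp) (π.injective h.symm)
  have hlt : π p' < π p := lt_of_le_of_ne (not_lt.mp hc) hne
  obtain ⟨q, hq, hqv⟩ := not_LRm_iff.mp hp
  exact h321 (pattern_delta3_intro hq hpp hlt hqv)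

lemma aIdx_mono {p p' : Fin n} (h : p ≤ p') : aIdx π p ≤ aIdx π p' := by
  apply card_le_card
  intro q hq
  simp only [mem_filter, mem_univ, true_and] at *
  exact ⟨hq.1, lt_of_lt_of_le hq.2 h⟩

lemma aIdx_succ_le {p p' : Fin n} (hp : ¬ LRm π p) (h : p < p') :
    aIdx π p + 1 ≤ aIdx π p' := by
  have hins : insert p (univ.filter (fun q => ¬ LRm π q ∧ q < p)) ⊆
      univ.filter (fun q => ¬ LRm π q ∧ q < p') := by
    intro q hq
    simp only [mem_insert, mem_filter, mem_univ, true_and] at *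
    rcases hq with rfl | hq
    · exact ⟨hp, h⟩
    · exact ⟨hq.1, lt_trans hq.2 h⟩
  have hnotmem : p ∉ univ.filter (fun q => ¬ LRm π q ∧ q < p) := by
    simp only [mem_filter, mem_univ, true_and, not_and]
    exact fun _ => lt_irrefl p
  calc aIdx π p + 1 = (insert p (univ.filter (fun q => ¬ LRm π q ∧ q < p))).card := by
        rw [card_insert_of_notMem hnotmem]; rfl
    _ ≤ _ := card_le_card hins

lemma bIdx_mono {p p' : Fin n} (h : π p ≤ π p') : bIdx π p ≤ bIdx π p' := by
  apply card_le_card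
  intro q hq
  simp only [mem_filter, mem_univ, true_and] at *
  exact ⟨hq.1, lt_of_lt_of_le hq.2 h⟩

lemma aIdx_le_bIdx {p : Fin n} (hp : LRm π p) : aIdx π p ≤ bIdx π p := by
  apply card_le_card
  intro q hq
  simp only [mem_filter, mem_univ, true_and] at *
  exact ⟨hq.1, hp q hq.2⟩

lemma aIdx_succ_le_bIdx (h321 : ¬ Pattern (delta 3) π) {p p' : Fin n}
    (hp : ¬ LRm π p) (hv : π p < π p') :
    aIdx π p + 1 ≤ bIdx π p' := by
  have hins : insert p (univ.filter (fun q => ¬ LRm π q ∧ q < p)) ⊆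
      univ.filter (fun q => ¬ LRm π q ∧ π q < π p') := by
    intro q hq
    simp only [mem_insert, mem_filter, mem_univ, true_and] at *
    rcases hq with rfl | hq
    · exact ⟨hp, hv⟩
    · exact ⟨hq.1, lt_trans (nonLR_lt h321 hq.1 hp hq.2) hv⟩
  have hnotmem : p ∉ univ.filter (fun q => ¬ LRm π q ∧ q < p) := by
    simp only [mem_filter, mem_univ, true_and, not_and]
    exact fun _ => lt_irrefl p
  calc aIdx π p + 1 = (insert p (univ.filter (fun q => ¬ LRm π q ∧ q < p))).card := by
        rw [card_insert_of_notMem hnotmem]; rfl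
    _ ≤ _ := card_le_card hins

lemma bIdx_le_aIdx (h321 : ¬ Pattern (delta 3) π) {p p' : Fin n}
    (hp' : ¬ LRm π p') (hv : π p ≤ π p') : bIdx π p ≤ aIdx π p' := by
  apply card_le_card
  intro q hq
  simp only [mem_filter, mem_univ, true_and] at *
  refine ⟨hq.1, ?_⟩
  by_contra hnot
  rcases eq_or_lt_of_le (not_lt.mp hnot) with h | h
  · exact absurd (h ▸ hq.2) (not_lt.mpr hv)
  · exact absurd (lt_trans (nonLR_lt h321 hp' hq.1 h) hq.2) (not_lt.mpr hv)

lemma bIdx_le_claim2 (h321 : ¬ Pattern (delta 3) π) (h4123 : ¬ Pattern p4123 π)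
    {m' : Fin n} (hm : LRm π m') : bIdx π m' ≤ aIdx π m' + 2 := by
  set S := univ.filter (fun q => ¬ LRm π q ∧ π q < π m' ∧ m' < q) with hSdef
  have hsplit : bIdx π m' ≤ aIdx π m' + S.card := by
    have hsub : univ.filter (fun q => ¬ LRm π q ∧ π q < π m') ⊆
        (univ.filter (fun q => ¬ LRm π q ∧ q < m')) ∪ S := by
      intro q hq
      simp only [hSdef, mem_union, mem_filter, mem_univ, true_and] at *
      rcases lt_trichotomy q m' with h | h | h
      · exact Or.inl ⟨hq.1, h⟩
      · exact absurd (h ▸ hq.2) (lt_irrefl _)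
      · exact Or.inr ⟨hq.1, hq.2, h⟩
    calc bIdx π m' ≤ _ := card_le_card hsub
      _ ≤ _ := card_union_le _ _
  by_contra hc
  have hS3 : 3 ≤ S.card := by omega
  let e := S.orderIsoOfFin rfl
  set x1 : Fin n := ↑(e ⟨0, by omega⟩) with hx1
  set x2 : Fin n := ↑(e ⟨1, by omega⟩) with hx2
  set x3 : Fin n := ↑(e ⟨2, by omega⟩) with hx3
  have hm1 : x1 ∈ S := (e ⟨0, by omega⟩).2
  have hm2 : x2 ∈ S := (e ⟨1, by omega⟩).2
  have hm3 : x3 ∈ S := (e ⟨2, by omega⟩).2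
  have h12 : x1 < x2 := by
    have := e.lt_iff_lt.mpr (show (⟨0, by omega⟩ : Fin S.card) < ⟨1, by omega⟩ by
      simp [Fin.lt_def])
    exact Subtype.coe_lt_coe.mpr this
  have h23 : x2 < x3 := by
    have := e.lt_iff_lt.mpr (show (⟨1, by omega⟩ : Fin S.card) < ⟨2, by omega⟩ by
      simp [Fin.lt_def])
    exact Subtype.coe_lt_coe.mpr this
  simp only [hSdef, mem_filter, mem_univ, true_and] at hm1 hm2 hm3
  exact h4123 (pattern_p4123_intro hm1.2.2 h12 h23
    (nonLR_lt h321 hm1.1 hm2.1 h12) (nonLR_lt h321 hm2.1 hm3.1 h23) hm3.2.1)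

lemma colIdx_mono (h321 : ¬ Pattern (delta 3) π) (h4123 : ¬ Pattern p4123 π)
    {p p' : Fin n} (h : p < p') : colIdx π p ≤ colIdx π p' := by
  by_cases hp : LRm π p <;> by_cases hp' : LRm π p' <;>
    simp only [colIdx, if_pos, if_neg, hp, hp', if_true, if_false]
  · have ha := aIdx_mono (π := π) (le_of_lt h)
    have hb := bIdx_mono (π := π) (le_of_lt (LR_lt hp' h))
    omega
  · have ha := aIdx_mono (π := π) (le_of_lt h)
    omega
  · have ha := aIdx_mono (π := π) (le_of_lt h)
    have hb := aIdx_succ_le_bIdx h321 hp (LR_lt hp' h)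
    omega
  · have ha := aIdx_mono (π := π) (le_of_lt h)
    omega

lemma rowIdx_mono (h321 : ¬ Pattern (delta 3) π) (h4123 : ¬ Pattern p4123 π)
    {p p' : Fin n} (h : π p < π p') : rowIdx π p ≤ rowIdx π p' := by
  by_cases hp : LRm π p <;> by_cases hp' : LRm π p' <;>
    simp only [rowIdx, if_pos, if_neg, hp, hp', if_true, if_false]
  · have hpp : p < p' := by
      by_contra hc
      rcases eq_or_lt_of_le (not_lt.mp hc) with he | hlt
      · exact absurd (he ▸ h) (lt_irrefl _)
      · exact absurd (LR_lt hp hlt) (asymm h)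
    have ha := aIdx_mono (π := π) (le_of_lt hpp)
    have hb := bIdx_mono (π := π) (le_of_lt h)
    omega
  · -- p LR, p' non-LR
    have hb := bIdx_le_aIdx h321 hp' (le_of_lt h)
    omega
  · -- p non-LR, p' LR
    have h1 := aIdx_succ_le_bIdx h321 hp h
    have h2 := bIdx_le_claim2 h321 h4123 hp'
    omega
  · -- both non-LR
    have hpp : p < p' := by
      by_contra hc
      rcases eq_or_lt_of_le (not_lt.mp hc) with he | hlt
      · exact absurd (he ▸ h) (lt_irrefl _)
      · exact absurd (nonLR_lt h321 hp' hp hlt) (asymm h)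
    have ha := aIdx_mono (π := π) (le_of_lt hpp)
    omega

lemma col_row_rel (p : Fin n) :
    colIdx π p = rowIdx π p ∨ colIdx π p = rowIdx π p + 1 := by
  by_cases hp : LRm π p
  · left; simp [colIdx, rowIdx, hp]
  · right; simp [colIdx, rowIdx, hp]

lemma aIdx_le (p : Fin n) : aIdx π p ≤ n := by
  calc aIdx π p ≤ (univ : Finset (Fin n)).card := card_le_card (filter_subset _ _)
    _ = n := by simp

lemma colIdx_lt (p : Fin n) : colIdx π p < n + 2 := by
  have := aIdx_le (π := π) p
  by_cases hp : LRm π p <;> simp only [colIdx, if_pos, if_neg, hp, if_true, if_false] <;> omega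

lemma rowIdx_lt (p : Fin n) : rowIdx π p < n + 2 := by
  have := aIdx_le (π := π) p
  by_cases hp : LRm π p <;> simp only [rowIdx, if_pos, if_neg, hp, if_true, if_false] <;> omega

end Aux3
section Aux4
open Finset
variable {n : ℕ}

lemma downset_card {S : Finset (Fin n)} (hS : ∀ q ∈ S, ∀ q', q' ≤ q → q' ∈ S) (p : Fin n) :
    p ∈ S ↔ (p : ℕ) < S.card := by
  constructor
  · intro hp
    have hsub : Finset.Iic p ⊆ S := fun q hq => hS p hp q (Finset.mem_Iic.mp hq)
    have := card_le_card hsub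
    rw [Fin.card_Iic] at this
    omega
  · intro hp
    by_contra hnp
    have hsub : S ⊆ Finset.Iio p := by
      intro q hq
      rw [Finset.mem_Iio]
      rcases lt_or_ge q p with h | h
      · exact h
      · exact absurd (hS q hq p h) hnp
    have := card_le_card hsub
    rw [Fin.card_Iio] at this
    omega

def cFun (π : Perm n) (k : ℕ) : ℕ := (univ.filter (fun p => colIdx π p < k)).card

def rFun (π : Perm n) (l : ℕ) : ℕ :=
  (univ.filter (fun v => rowIdx π (π.symm v) < l)).card

variable {π : Perm n}

lemma lt_cFun_iff (h321 : ¬ Pattern (delta 3) π) (h4123 : ¬ Pattern p4123 π)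
    (p : Fin n) (k : ℕ) : (p : ℕ) < cFun π k ↔ colIdx π p < k := by
  have := downset_card (S := univ.filter (fun p => colIdx π p < k)) (fun q hq q' hq' => by
    simp only [mem_filter, mem_univ, true_and] at *
    rcases eq_or_lt_of_le hq' with rfl | hlt
    · exact hq
    · exact lt_of_le_of_lt (colIdx_mono h321 h4123 hlt) hq) p
  unfold cFun
  rw [← this]
  simp [mem_filter]

lemma lt_rFun_iff (h321 : ¬ Pattern (delta 3) π) (h4123 : ¬ Pattern p4123 π)
    (p : Fin n) (l : ℕ) : ((π p : ℕ)) < rFun π l ↔ rowIdx π p < l := by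
  have := downset_card (S := univ.filter (fun v => rowIdx π (π.symm v) < l)) (fun q hq q' hq' => by
    simp only [mem_filter, mem_univ, true_and] at *
    rcases eq_or_lt_of_le hq' with rfl | hlt
    · exact hq
    · have : π (π.symm q') < π (π.symm q) := by
        rwa [Equiv.apply_symm_apply, Equiv.apply_symm_apply]
      exact lt_of_le_of_lt (rowIdx_mono h321 h4123 this) hq) (π p)
  unfold rFun
  rw [← this]
  simp only [mem_filter, mem_univ, true_and, Equiv.symm_apply_apply]

lemma cell_eq (h321 : ¬ Pattern (delta 3) π) (h4123 : ¬ Pattern p4123 π) (k l : ℕ) :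
    cellSet π (cFun π) (rFun π) k l = {p | colIdx π p = k ∧ rowIdx π p = l} := by
  ext p
  simp only [cellSet, Set.mem_setOf_eq]
  have h1 := lt_cFun_iff h321 h4123 p k
  have h2 := lt_cFun_iff h321 h4123 p (k+1)
  have h3 := lt_rFun_iff h321 h4123 p l
  have h4 := lt_rFun_iff h321 h4123 p (l+1)
  omega

/-- order-coherent sets give an `Av(21)` subpermutation -/
lemma subperm_avDelta2 {A : Set (Fin n)}
    (hA : ∀ p ∈ A, ∀ q ∈ A, p < q → π p < π q) : SubpermIn π A (avSet (delta 2)) := by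
  classical
  let S := (Set.toFinite A).toFinset
  have hmemS : ∀ x, x ∈ S ↔ x ∈ A := fun x => Set.Finite.mem_toFinset _
  let e := S.orderIsoOfFin rfl
  let f : Fin S.card ↪o Fin n :=
    (e.toOrderEmbedding).trans (OrderEmbedding.subtype (fun x => x ∈ S))
  have hfA : ∀ i, (f i : Fin n) ∈ A := fun i => (hmemS _).mp (e i).2
  refine ⟨S.card, 1, f, ?_, ?_, one_avoids_delta2 _⟩
  · ext x
    constructor
    · rintro ⟨i, rfl⟩
      exact hfA i
    · intro hx
      exact ⟨e.symm ⟨x, (hmemS x).mpr hx⟩, by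
        show ((e (e.symm ⟨x, _⟩) : S) : Fin n) = x
        rw [OrderIso.apply_symm_apply]⟩
  · intro i j
    simp only [Equiv.Perm.coe_one, id_eq]
    constructor
    · intro hij
      exact hA _ (hfA i) _ (hfA j) (f.strictMono hij)
    · intro hv
      rcases lt_trichotomy i j with h | h | h
      · exact h
      · exact absurd (h ▸ hv) (lt_irrefl _)
      · exact absurd (hA _ (hfA j) _ (hfA i) (f.strictMono h)) (asymm hv)

lemma subperm_singleton {A : Set (Fin n)} {p : Fin n} (hA : A = {p}) :
    SubpermIn π A (fun m => {σ : Perm m | ¬ Pattern (delta 2) σ ∧ ¬ Pattern (1 : Perm 2) σ}) := by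
  refine ⟨1, 1, emb1 p, ?_, ?_, perm1_avoids_len2 _, perm1_avoids_len2 _⟩
  · rw [hA]
    exact Set.range_const
  · intro i j
    rw [Subsingleton.elim i j]
    simp

-- Forward-direction helpers
lemma subperm_av21_incr {A : Set (Fin n)} (h : SubpermIn π A (avSet (delta 2)))
    {p q : Fin n} (hp : p ∈ A) (hq : q ∈ A) (hpq : p < q) : π p < π q := by
  obtain ⟨m, σ, f, hrange, hiso, hmem⟩ := h
  rw [← hrange] at hp hq
  obtain ⟨i, rfl⟩ := hp
  obtain ⟨j, rfl⟩ := hq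
  have hij : i < j := f.lt_iff_lt.mp hpq
  by_contra hc
  have hne : π (f j) ≠ π (f i) := fun h =>
    (ne_of_lt hpq) (f.injective (π.injective h.symm) ▸ rfl)
  have hlt : π (f j) < π (f i) := lt_of_le_of_ne (not_lt.mp hc) hne
  exact hmem (pattern_delta2_intro hij ((hiso j i).mpr hlt))

lemma subperm_E_subsingleton {A : Set (Fin n)}
    (h : SubpermIn π A (fun m => {σ : Perm m | ¬ Pattern (delta 2) σ ∧ ¬ Pattern (1 : Perm 2) σ}))
    {p q : Fin n} (hp : p ∈ A) (hq : q ∈ A) : p = q := by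
  obtain ⟨m, σ, f, hrange, hiso, hmem1, hmem2⟩ := h
  rw [← hrange] at hp hq
  obtain ⟨i, rfl⟩ := hp
  obtain ⟨j, rfl⟩ := hq
  rcases lt_trichotomy i j with hij | hij | hij
  · exfalso
    rcases lt_trichotomy (σ i) (σ j) with hs | hs | hs
    · exact hmem2 (pattern_12_intro hij hs)
    · exact (ne_of_lt hij) (σ.injective hs)
    · exact hmem1 (pattern_delta2_intro hij hs)
  · rw [hij]
  · exfalso
    rcases lt_trichotomy (σ j) (σ i) with hs | hs | hs
    · exact hmem2 (pattern_12_intro hij hs)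
    · exact (ne_of_lt hij) (σ.injective hs)
    · exact hmem1 (pattern_delta2_intro hij hs)

lemma subperm_empty {A : Set (Fin n)} (h : SubpermIn π A emptyCell) : A = ∅ := by
  obtain ⟨m, σ, f, hrange, hiso, hmem⟩ := h
  have hm : m = 0 := hmem
  subst hm
  rw [← hrange]
  ext x
  simp only [Set.mem_range, Set.mem_empty_iff_false, iff_false]
  rintro ⟨i, rfl⟩
  exact i.elim0

lemma exists_cell_index {c : ℕ → ℕ} (hmono : Monotone c) (hc0 : c 0 = 0) {k0 : ℕ}
    (hk0 : c k0 = n) {x : ℕ} (hx : x < n) : ∃ k, c k ≤ x ∧ x < c (k + 1) := by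
  set k := Nat.findGreatest (fun k => c k ≤ x) k0 with hk
  have h1 : c k ≤ x := Nat.findGreatest_spec (P := fun k => c k ≤ x) (Nat.zero_le _)
    (by omega)
  refine ⟨k, h1, ?_⟩
  rcases le_or_gt (k + 1) k0 with h | h
  · by_contra hc
    exact Nat.findGreatest_is_greatest (P := fun k => c k ≤ x) (by omega) h (not_lt.mp hc)
  · have : c k0 ≤ c (k + 1) := hmono (by omega)
    omega

lemma cell_col_mono {c r : ℕ → ℕ} (hcm : Monotone c) {p q : Fin n} {k l k' l' : ℕ}
    (hp : p ∈ cellSet π c r k l) (hq : q ∈ cellSet π c r k' l') (hpq : (p : ℕ) ≤ (q : ℕ)) :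
    k ≤ k' := by
  by_contra hlt
  have hcc : c (k' + 1) ≤ c k := hcm (by omega)
  obtain ⟨h1, h2, -, -⟩ := hp
  obtain ⟨h1', h2', -, -⟩ := hq
  omega

lemma cell_row_mono {c r : ℕ → ℕ} (hrm : Monotone r) {p q : Fin n} {k l k' l' : ℕ}
    (hp : p ∈ cellSet π c r k l) (hq : q ∈ cellSet π c r k' l') (hpq : (π p : ℕ) ≤ (π q : ℕ)) :
    l ≤ l' := by
  by_contra hlt
  have hrr : r (l' + 1) ≤ r l := hrm (by omega)
  obtain ⟨-, -, h3, h4⟩ := hp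
  obtain ⟨-, -, h3', h4'⟩ := hq
  omega

end Aux4
theorem stair_arith3 {k0 k1 k2 l0 l1 l2 : ℕ}
    (r0 : k0 = l0 ∨ k0 = l0 + 1) (r1 : k1 = l1 ∨ k1 = l1 + 1) (r2 : k2 = l2 ∨ k2 = l2 + 1)
    (ck01 : k0 ≤ k1) (ck12 : k1 ≤ k2) (rl10 : l1 ≤ l0) (rl21 : l2 ≤ l1)
    (hne01 : ¬(k0 = k1 ∧ l0 = l1)) (hne02 : ¬(k0 = k2 ∧ l0 = l2))
    (hne12 : ¬(k1 = k2 ∧ l1 = l2)) : False := by omega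

theorem stair_arith4 {k0 k1 k2 k3 l0 l1 l2 l3 : ℕ}
    (r0 : k0 = l0 ∨ k0 = l0 + 1) (r1 : k1 = l1 ∨ k1 = l1 + 1)
    (r2 : k2 = l2 ∨ k2 = l2 + 1) (r3 : k3 = l3 ∨ k3 = l3 + 1)
    (ck01 : k0 ≤ k1) (ck12 : k1 ≤ k2) (ck23 : k2 ≤ k3)
    (rl12 : l1 ≤ l2) (rl23 : l2 ≤ l3) (rl30 : l3 ≤ l0)
    (hne01 : ¬(k0 = k1 ∧ l0 = l1)) (hne02 : ¬(k0 = k2 ∧ l0 = l2))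
    (hne03 : ¬(k0 = k3 ∧ l0 = l3))
    (hd12 : (k1 = k2 ∧ l1 = l2) → k1 = l1) (hd13 : (k1 = k3 ∧ l1 = l3) → k1 = l1)
    (hd23 : (k2 = k3 ∧ l2 = l3) → k2 = l2) : False := by omega

/-- The infinite increasing `(Av(21), E)` staircase, where
`E = Av(12, 21)` consists of the empty permutation and the permutation `1`,
equals the class `Av(321, 4123)`. -/
theorem incStaircase_av21_E_eq (n : ℕ) :
    gridSet (incStairM (avSet (delta 2))
        (fun m => {π : Perm m | ¬ Pattern (delta 2) π ∧ ¬ Pattern (1 : Perm 2) π})) n =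
      {π : Perm n | ¬ Pattern (delta 3) π ∧ ¬ Pattern p4123 π} := by
  classical
  ext π
  simp only [gridSet, Set.mem_setOf_eq]
  constructor
  · -- forward: a gridded permutation avoids 321 and 4123
    rintro ⟨c, r, hcm, hrm, hc0, hr0, hcub, hrub, ⟨kc, hkc⟩, ⟨kr, hkr⟩, hcell⟩
    have hloc : ∀ p : Fin n, ∃ k l, p ∈ cellSet π c r k l := by
      intro p
      obtain ⟨k, hk1, hk2⟩ := exists_cell_index hcm hc0 hkc p.isLt
      obtain ⟨l, hl1, hl2⟩ := exists_cell_index hrm hr0 hkr (π p).isLt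
      exact ⟨k, l, hk1, hk2, hl1, hl2⟩
    have hrel : ∀ k l (p : Fin n), p ∈ cellSet π c r k l → k = l ∨ k = l + 1 := by
      intro k l p hp
      rcases hcell k l with h | h
      · rw [h] at hp; exact absurd hp (Set.notMem_empty p)
      · by_cases h1 : k = l
        · exact Or.inl h1
        · by_cases h2 : k = l + 1
          · exact Or.inr h2
          · exfalso
            have hM : incStairM (avSet (delta 2))
                (fun m => {π : Perm m | ¬ Pattern (delta 2) π ∧ ¬ Pattern (1 : Perm 2) π}) k l
                = emptyCell := by
              simp [incStairM, h1, h2]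
            rw [hM] at h
            rw [subperm_empty h] at hp
            exact hp
    have hsame : ∀ k l (p q : Fin n), p ∈ cellSet π c r k l → q ∈ cellSet π c r k l →
        p < q → π q < π p → False := by
      intro k l p q hp hq hpq hv
      rcases hrel k l p hp with rfl | rfl
      · rcases hcell k k with h | h
        · rw [h] at hp; exact absurd hp (Set.notMem_empty p)
        · rw [show incStairM (avSet (delta 2))
              (fun m => {π : Perm m | ¬ Pattern (delta 2) π ∧ ¬ Pattern (1 : Perm 2) π}) k k
              = avSet (delta 2) from by simp [incStairM]] at h
          exact absurd (subperm_av21_incr h hp hq hpq) (asymm hv)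
      · rcases hcell (l + 1) l with h | h
        · rw [h] at hp; exact absurd hp (Set.notMem_empty p)
        · rw [show incStairM (avSet (delta 2))
              (fun m => {π : Perm m | ¬ Pattern (delta 2) π ∧ ¬ Pattern (1 : Perm 2) π}) (l+1) l
              = (fun m => {π : Perm m | ¬ Pattern (delta 2) π ∧ ¬ Pattern (1 : Perm 2) π})
              from by simp [incStairM]] at h
          exact (ne_of_lt hpq) (subperm_E_subsingleton h hp hq)
    have hsame2 : ∀ k l (p q : Fin n), p ∈ cellSet π c r k l → q ∈ cellSet π c r k l →
        p ≠ q → k = l := by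
      intro k l p q hp hq hne
      rcases hrel k l p hp with rfl | rfl
      · rfl
      · exfalso
        rcases hcell (l + 1) l with h | h
        · rw [h] at hp; exact absurd hp (Set.notMem_empty p)
        · rw [show incStairM (avSet (delta 2))
              (fun m => {π : Perm m | ¬ Pattern (delta 2) π ∧ ¬ Pattern (1 : Perm 2) π}) (l+1) l
              = (fun m => {π : Perm m | ¬ Pattern (delta 2) π ∧ ¬ Pattern (1 : Perm 2) π})
              from by simp [incStairM]] at h
          exact hne (subperm_E_subsingleton h hp hq)
    constructor
    · intro hpat
      obtain ⟨x0, x1, x2, h01, h12, v21, v10⟩ := pattern_delta3_elim hpat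
      have v20 : π x2 < π x0 := lt_trans v21 v10
      obtain ⟨k0, l0, hcell0⟩ := hloc x0
      obtain ⟨k1, l1, hcell1⟩ := hloc x1
      obtain ⟨k2, l2, hcell2⟩ := hloc x2
      have r0 := hrel _ _ _ hcell0
      have r1 := hrel _ _ _ hcell1
      have r2 := hrel _ _ _ hcell2
      have ck01 : k0 ≤ k1 := cell_col_mono hcm hcell0 hcell1 (le_of_lt h01)
      have ck12 : k1 ≤ k2 := cell_col_mono hcm hcell1 hcell2 (le_of_lt h12)
      have rl10 : l1 ≤ l0 := cell_row_mono hrm hcell1 hcell0 (le_of_lt v10)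
      have rl21 : l2 ≤ l1 := cell_row_mono hrm hcell2 hcell1 (le_of_lt v21)
      have hne01 : ¬(k0 = k1 ∧ l0 = l1) := by
        rintro ⟨rfl, rfl⟩; exact hsame _ _ _ _ hcell0 hcell1 h01 v10
      have hne02 : ¬(k0 = k2 ∧ l0 = l2) := by
        rintro ⟨rfl, rfl⟩; exact hsame _ _ _ _ hcell0 hcell2 (lt_trans h01 h12) v20
      have hne12 : ¬(k1 = k2 ∧ l1 = l2) := by
        rintro ⟨rfl, rfl⟩; exact hsame _ _ _ _ hcell1 hcell2 h12 v21
      exact stair_arith3 r0 r1 r2 ck01 ck12 rl10 rl21 hne01 hne02 hne12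
    · intro hpat
      obtain ⟨x0, x1, x2, x3, h01, h12, h23, v12, v23, v30⟩ := pattern_p4123_elim hpat
      have v10 : π x1 < π x0 := lt_trans v12 (lt_trans v23 v30)
      have v20 : π x2 < π x0 := lt_trans v23 v30
      obtain ⟨k0, l0, hcell0⟩ := hloc x0
      obtain ⟨k1, l1, hcell1⟩ := hloc x1
      obtain ⟨k2, l2, hcell2⟩ := hloc x2
      obtain ⟨k3, l3, hcell3⟩ := hloc x3
      have r0 := hrel _ _ _ hcell0
      have r1 := hrel _ _ _ hcell1
      have r2 := hrel _ _ _ hcell2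
      have r3 := hrel _ _ _ hcell3
      have ck01 : k0 ≤ k1 := cell_col_mono hcm hcell0 hcell1 (le_of_lt h01)
      have ck12 : k1 ≤ k2 := cell_col_mono hcm hcell1 hcell2 (le_of_lt h12)
      have ck23 : k2 ≤ k3 := cell_col_mono hcm hcell2 hcell3 (le_of_lt h23)
      have rl12 : l1 ≤ l2 := cell_row_mono hrm hcell1 hcell2 (le_of_lt v12)
      have rl23 : l2 ≤ l3 := cell_row_mono hrm hcell2 hcell3 (le_of_lt v23)
      have rl30 : l3 ≤ l0 := cell_row_mono hrm hcell3 hcell0 (le_of_lt v30)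
      have hne01 : ¬(k0 = k1 ∧ l0 = l1) := by
        rintro ⟨rfl, rfl⟩; exact hsame _ _ _ _ hcell0 hcell1 h01 v10
      have hne02 : ¬(k0 = k2 ∧ l0 = l2) := by
        rintro ⟨rfl, rfl⟩; exact hsame _ _ _ _ hcell0 hcell2 (lt_trans h01 h12) v20
      have hne03 : ¬(k0 = k3 ∧ l0 = l3) := by
        rintro ⟨rfl, rfl⟩
        exact hsame _ _ _ _ hcell0 hcell3 (lt_trans h01 (lt_trans h12 h23)) v30
      have hd12 : (k1 = k2 ∧ l1 = l2) → k1 = l1 := by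
        rintro ⟨rfl, rfl⟩; exact hsame2 _ _ _ _ hcell1 hcell2 (ne_of_lt h12)
      have hd13 : (k1 = k3 ∧ l1 = l3) → k1 = l1 := by
        rintro ⟨rfl, rfl⟩; exact hsame2 _ _ _ _ hcell1 hcell3 (ne_of_lt (lt_trans h12 h23))
      have hd23 : (k2 = k3 ∧ l2 = l3) → k2 = l2 := by
        rintro ⟨rfl, rfl⟩; exact hsame2 _ _ _ _ hcell2 hcell3 (ne_of_lt h23)
      exact stair_arith4 r0 r1 r2 r3 ck01 ck12 ck23 rl12 rl23 rl30 hne01 hne02 hne03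
        hd12 hd13 hd23
  · -- backward: an avoider has a gridding
    rintro ⟨h321, h4123⟩
    refine ⟨cFun π, rFun π, ?_, ?_, ?_, ?_, ?_, ?_, ⟨n + 2, ?_⟩, ⟨n + 2, ?_⟩, ?_⟩
    · intro k k' hkk
      apply Finset.card_le_card
      intro q hq
      simp only [Finset.mem_filter, Finset.mem_univ, true_and] at *
      omega
    · intro l l' hll
      apply Finset.card_le_card
      intro q hq
      simp only [Finset.mem_filter, Finset.mem_univ, true_and] at *
      omega
    · simp [cFun]
    · simp [rFun]
    · intro k
      calc cFun π k ≤ (Finset.univ : Finset (Fin n)).card :=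
            Finset.card_le_card (Finset.filter_subset _ _)
        _ = n := by simp
    · intro l
      calc rFun π l ≤ (Finset.univ : Finset (Fin n)).card :=
            Finset.card_le_card (Finset.filter_subset _ _)
        _ = n := by simp
    · unfold cFun
      rw [Finset.filter_true_of_mem (fun p _ => colIdx_lt p)]
      simp
    · unfold rFun
      rw [Finset.filter_true_of_mem (fun p _ => rowIdx_lt _)]
      simp
    · intro k l
      by_cases hkl : k = l
      · subst hkl
        by_cases hE : cellSet π (cFun π) (rFun π) k k = ∅
        · exact Or.inl hE
        · right
          rw [show incStairM (avSet (delta 2))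
              (fun m => {π : Perm m | ¬ Pattern (delta 2) π ∧ ¬ Pattern (1 : Perm 2) π}) k k
              = avSet (delta 2) from by simp [incStairM]]
          rw [cell_eq h321 h4123]
          apply subperm_avDelta2
          intro p hp q hq hpq
          simp only [Set.mem_setOf_eq] at hp hq
          have hLp : LRm π p := by
            by_contra hcon
            have h1 := hp.1; have h2 := hp.2
            simp only [colIdx, rowIdx, if_neg hcon] at h1 h2
            omega
          have hLq : LRm π q := by
            by_contra hcon
            have h1 := hq.1; have h2 := hq.2
            simp only [colIdx, rowIdx, if_neg hcon] at h1 h2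
            omega
          exact LR_lt hLq hpq
      · by_cases hk2 : k = l + 1
        · subst hk2
          by_cases hE : cellSet π (cFun π) (rFun π) (l + 1) l = ∅
          · exact Or.inl hE
          · right
            rw [show incStairM (avSet (delta 2))
                (fun m => {π : Perm m | ¬ Pattern (delta 2) π ∧ ¬ Pattern (1 : Perm 2) π}) (l+1) l
                = (fun m => {π : Perm m | ¬ Pattern (delta 2) π ∧ ¬ Pattern (1 : Perm 2) π})
                from by simp [incStairM]]
            obtain ⟨p, hp⟩ := Set.nonempty_iff_ne_empty.mpr hE
            have hchar : ∀ q : Fin n, q ∈ cellSet π (cFun π) (rFun π) (l + 1) l →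
                ¬ LRm π q ∧ aIdx π q = l := by
              intro q hq
              rw [cell_eq h321 h4123] at hq
              simp only [Set.mem_setOf_eq] at hq
              have hnq : ¬ LRm π q := by
                intro hcon
                have h1 := hq.1; have h2 := hq.2
                simp only [colIdx, rowIdx, if_pos hcon] at h1 h2
                omega
              refine ⟨hnq, ?_⟩
              have h2 := hq.2
              simp only [rowIdx, if_neg hnq] at h2
              exact h2
            apply subperm_singleton (p := p)
            ext q
            simp only [Set.mem_singleton_iff]
            constructor
            · intro hq
              obtain ⟨hnq, haq⟩ := hchar q hq
              obtain ⟨hnp, hap⟩ := hchar p hp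
              rcases lt_trichotomy q p with h | h | h
              · have := aIdx_succ_le (π := π) hnq h; omega
              · exact h
              · have := aIdx_succ_le (π := π) hnp h; omega
            · rintro rfl
              exact hp
        · left
          rw [cell_eq h321 h4123]
          ext p
          simp only [Set.mem_setOf_eq, Set.mem_empty_iff_false, iff_false]
          rintro ⟨h1, h2⟩
          have := col_row_rel (π := π) p
          omega
end

section
/- For all nonempty permutations α and γ, the infinite increasing (Av(α⊖1), Av(1⊖γ)) staircase is contained in Av(α⊖1⊖γ); that is, every permutation in this staircase class avoids α⊖1⊖γ. -/
open Filter Topology ENNReal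

/-- The permutation `1` of length one. -/
def one1 : Perm 1 := 1


section AuxStaircase

lemma aux_exists_cell {n : ℕ} (cf : ℕ → ℕ) (hm : Monotone cf) (h0 : cf 0 = 0)
    (hK : ∃ K, cf K = n) (q : ℕ) (hq : q < n) : ∃ k, cf k ≤ q ∧ q < cf (k + 1) := by
  have hex : ∃ k, q < cf (k + 1) := by
    obtain ⟨K, hKn⟩ := hK
    cases K with
    | zero => omega
    | succ K' => exact ⟨K', by omega⟩
  refine ⟨Nat.find hex, ?_, Nat.find_spec hex⟩
  rcases Nat.eq_zero_or_pos (Nat.find hex) with h | h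
  · rw [h, h0]; exact Nat.zero_le q
  · have hmin := Nat.find_min hex (m := Nat.find hex - 1) (by omega)
    have h2 : Nat.find hex - 1 + 1 = Nat.find hex := by omega
    rw [h2] at hmin
    omega

lemma aux_left {m n : ℕ} (π : Perm m) (σ : Perm n) (i : Fin m) :
    ((skewSum π σ) (Fin.castAdd n i) : ℕ) = n + (π i : ℕ) := by
  simp [skewSum]; omega

lemma aux_right {m n : ℕ} (π : Perm m) (σ : Perm n) (j : Fin n) :
    ((skewSum π σ) (Fin.natAdd m j) : ℕ) = (σ j : ℕ) := by
  simp [skewSum]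

lemma aux_asum {a : ℕ} (α : Perm a) (i : Fin (a + 1)) (hi : (i : ℕ) < a) :
    ((skewSum α one1) i : ℕ) = 1 + (α ⟨(i : ℕ), hi⟩ : ℕ) := by
  have e3 := aux_left α one1 ⟨(i : ℕ), hi⟩
  have e4 : Fin.castAdd 1 (⟨(i : ℕ), hi⟩ : Fin a) = i := Fin.ext rfl
  rw [e4] at e3; exact e3

lemma aux_asum_last {a : ℕ} (α : Perm a) :
    ((skewSum α one1) (⟨a, Nat.lt_succ_self a⟩ : Fin (a + 1)) : ℕ) = 0 := by
  have e3 := aux_right α one1 (⟨0, Nat.one_pos⟩ : Fin 1)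
  have e4 : Fin.natAdd a (⟨0, Nat.one_pos⟩ : Fin 1) = (⟨a, Nat.lt_succ_self a⟩ : Fin (a + 1)) :=
    Fin.ext (by simp)
  rw [e4] at e3
  rw [e3]
  simp [one1]

lemma aux_gsum_pos {c : ℕ} (γ : Perm c) (j : Fin (1 + c)) (hj : 0 < (j : ℕ)) :
    ((skewSum one1 γ) j : ℕ) < c := by
  have hjlt : (j : ℕ) - 1 < c := by have := j.isLt; omega
  have e3 := aux_right one1 γ (⟨(j : ℕ) - 1, hjlt⟩ : Fin c)
  have e4 : Fin.natAdd 1 (⟨(j : ℕ) - 1, hjlt⟩ : Fin c) = j := by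
    apply Fin.ext; simp only [Fin.coe_natAdd]; omega
  rw [e4] at e3
  rw [e3]
  exact (γ _).isLt

lemma aux_tau_left {a c : ℕ} (α : Perm a) (γ : Perm c) (hle : a + 1 ≤ a + (1 + c))
    (i : Fin (a + 1)) :
    ((skewSum α (skewSum one1 γ)) (Fin.castLE hle i) : ℕ) = c + ((skewSum α one1) i : ℕ) := by
  rcases Nat.lt_or_ge (i : ℕ) a with hi | hi
  · have e1 : Fin.castLE hle i = Fin.castAdd (1 + c) (⟨(i : ℕ), hi⟩ : Fin a) := Fin.ext rfl
    rw [e1, aux_left]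
    rw [aux_asum α i hi]
    omega
  · have hia : (i : ℕ) = a := by have := i.isLt; omega
    have e1 : Fin.castLE hle i =
        Fin.natAdd a (Fin.castAdd c (⟨0, Nat.one_pos⟩ : Fin 1)) := by
      apply Fin.ext
      simp only [Fin.coe_castLE, Fin.coe_natAdd, Fin.coe_castAdd]
      omega
    rw [e1, aux_right, aux_left]
    have e2 : i = (⟨a, Nat.lt_succ_self a⟩ : Fin (a + 1)) := Fin.ext hia
    rw [e2, aux_asum_last]
    simp [one1]

lemma aux_tau_right {a c : ℕ} (α : Perm a) (γ : Perm c) (j : Fin (1 + c)) :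
    ((skewSum α (skewSum one1 γ)) (Fin.natAdd a j) : ℕ) = ((skewSum one1 γ) j : ℕ) :=
  aux_right α (skewSum one1 γ) j

end AuxStaircase

/-- For all nonempty permutations `α` and `γ`, the infinite increasing
`(Av(α ⊖ 1), Av(1 ⊖ γ))` staircase is contained in `Av(α ⊖ 1 ⊖ γ)`. -/
theorem incStaircase_subset_av_skew {a c : ℕ} (ha : 0 < a) (hc : 0 < c)
    (α : Perm a) (γ : Perm c) (n : ℕ) :
    gridSet (incStairM (avSet (skewSum α one1)) (avSet (skewSum one1 γ))) n ⊆
      avSet (skewSum α (skewSum one1 γ)) n := by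
  intro π hπ
  simp only [avSet, Set.mem_setOf_eq]
  rintro ⟨f, hf⟩
  obtain ⟨cd, rd, hcm, hrm, hc0, hr0, hcle, hrle, hcN, hrN, hcell⟩ := hπ
  set C := avSet (skewSum α one1) with hCdef
  set D := avSet (skewSum one1 γ) with hDdef
  have hle : a + 1 ≤ a + (1 + c) := by omega
  set τ := skewSum α (skewSum one1 γ) with hτdef
  set mid : Fin (a + (1 + c)) := Fin.castLE hle (⟨a, Nat.lt_succ_self a⟩ : Fin (a + 1)) with hmid
  have hτmid : (τ mid : ℕ) = c := by
    rw [hmid, hτdef, aux_tau_left α γ hle, aux_asum_last]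
    omega
  have hcellof : ∀ q : Fin n, ∃ k' l', q ∈ cellSet π cd rd k' l' ∧ (k' = l' ∨ k' = l' + 1) := by
    intro q
    obtain ⟨k', hk'1, hk'2⟩ := aux_exists_cell cd hcm hc0 hcN (q : ℕ) q.isLt
    obtain ⟨l', hl'1, hl'2⟩ := aux_exists_cell rd hrm hr0 hrN ((π q : Fin n) : ℕ) (π q).isLt
    have hq : q ∈ cellSet π cd rd k' l' := ⟨hk'1, hk'2, hl'1, hl'2⟩
    refine ⟨k', l', hq, ?_⟩
    rcases hcell k' l' with h | h
    · rw [h] at hq; exact absurd hq (Set.notMem_empty q)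
    · by_contra hne
      push_neg at hne
      obtain ⟨m, σ, g, hrg, hiso, hσ⟩ := h
      have hM : incStairM C D k' l' = emptyCell := by
        unfold incStairM
        rw [if_neg hne.1, if_neg hne.2]
      rw [hM] at hσ
      have hm0 : m = 0 := hσ
      have hq' : q ∈ Set.range ⇑g := by rw [hrg]; exact hq
      obtain ⟨x, -⟩ := hq'
      subst hm0
      exact x.elim0
  set p : Fin n := f mid with hp
  obtain ⟨k, l, hpcell, hktype⟩ := hcellof p
  obtain ⟨hp1, hp2, hp3, hp4⟩ := hpcell
  rcases hktype with rfl | rfl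
  · -- middle point in a diagonal (C) cell
    have hCcell : SubpermIn π (cellSet π cd rd k k) (C) := by
      rcases hcell k k with h | h
      · exfalso
        have hpc : p ∈ cellSet π cd rd k k := ⟨hp1, hp2, hp3, hp4⟩
        rw [h] at hpc; exact absurd hpc (Set.notMem_empty p)
      · have hM : incStairM C D k k = C := by unfold incStairM; rw [if_pos rfl]
        rw [hM] at h; exact h
    obtain ⟨m, σ, g, hrg, hiso, hσ⟩ := hCcell
    have hmem : ∀ i : Fin (a + 1), f (Fin.castLE hle i) ∈ cellSet π cd rd k k := by
      intro i
      rcases Nat.lt_or_ge (i : ℕ) a with hi | hi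
      · obtain ⟨k', l', hq, htyp⟩ := hcellof (f (Fin.castLE hle i))
        obtain ⟨hq1, hq2, hq3, hq4⟩ := hq
        have hlt : Fin.castLE hle i < mid := by
          rw [hmid, Fin.lt_def]; simpa using hi
        have hpos : ((f (Fin.castLE hle i)) : ℕ) < (p : ℕ) := f.strictMono hlt
        have hτlt : τ mid < τ (Fin.castLE hle i) := by
          rw [Fin.lt_def, hτmid, hτdef, aux_tau_left α γ hle i]
          have := aux_asum α i hi
          omega
        have hval : ((π p : Fin n) : ℕ) < ((π (f (Fin.castLE hle i)) : Fin n) : ℕ) :=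
          (hf mid (Fin.castLE hle i)).mp hτlt
        have hk'le : k' ≤ k := by
          by_contra hgt
          push_neg at hgt
          have := hcm (show k + 1 ≤ k' from hgt)
          omega
        have hl'ge : k ≤ l' := by
          by_contra hltc
          push_neg at hltc
          have := hrm (show l' + 1 ≤ k from hltc)
          omega
        have hk'eq : k' = k := by rcases htyp with h | h <;> omega
        have hl'eq : l' = k := by rcases htyp with h | h <;> omega
        subst hk'eq; subst hl'eq
        exact ⟨hq1, hq2, hq3, hq4⟩
      · have hia : (i : ℕ) = a := by have := i.isLt; omega
        have hieq : Fin.castLE hle i = mid := by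
          rw [hmid]; apply Fin.ext; simpa using hia
        rw [hieq]; exact ⟨hp1, hp2, hp3, hp4⟩
    have hrange : ∀ i : Fin (a + 1), ∃ x : Fin m, g x = f (Fin.castLE hle i) := by
      intro i
      have hmi := hmem i
      rw [← hrg] at hmi
      exact hmi
    choose h hgh using hrange
    have hmono : StrictMono h := by
      intro i j hij
      have h1 : Fin.castLE hle i < Fin.castLE hle j := by
        rw [Fin.lt_def] at hij ⊢; simpa using hij
      have h2 : g (h i) < g (h j) := by
        rw [hgh i, hgh j]; exact f.strictMono h1
      exact g.lt_iff_lt.mp h2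
    refine hσ ⟨OrderEmbedding.ofStrictMono h hmono, fun i j => ?_⟩
    show skewSum α one1 i < skewSum α one1 j ↔ σ (h i) < σ (h j)
    rw [hiso (h i) (h j), hgh i, hgh j, ← hf]
    simp only [hτdef, Fin.lt_def, aux_tau_left α γ hle]
    omega
  · -- middle point in a subdiagonal (D) cell
    have hDcell : SubpermIn π (cellSet π cd rd (l + 1) l) (D) := by
      rcases hcell (l + 1) l with h | h
      · exfalso
        have hpc : p ∈ cellSet π cd rd (l + 1) l := ⟨hp1, hp2, hp3, hp4⟩
        rw [h] at hpc; exact absurd hpc (Set.notMem_empty p)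
      · have hM : incStairM C D (l + 1) l = D := by
          unfold incStairM
          rw [if_neg (Nat.succ_ne_self l), if_pos rfl]
        rw [hM] at h; exact h
    obtain ⟨m, σ, g, hrg, hiso, hσ⟩ := hDcell
    have hmidr : mid = Fin.natAdd a (⟨0, by omega⟩ : Fin (1 + c)) :=
      Fin.ext (by simp [hmid])
    have hmem : ∀ j : Fin (1 + c), f (Fin.natAdd a j) ∈ cellSet π cd rd (l + 1) l := by
      intro j
      rcases Nat.eq_zero_or_pos (j : ℕ) with hj | hj
      · have hjeq : Fin.natAdd a j = mid := by
          rw [hmidr]; apply Fin.ext; simp [hj]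
        rw [hjeq]; exact ⟨hp1, hp2, hp3, hp4⟩
      · obtain ⟨k', l', hq, htyp⟩ := hcellof (f (Fin.natAdd a j))
        obtain ⟨hq1, hq2, hq3, hq4⟩ := hq
        have hlt : mid < Fin.natAdd a j := by
          have hmc : (mid : ℕ) = a := by simp [hmid]
          rw [Fin.lt_def, hmc]
          simp only [Fin.coe_natAdd]
          omega
        have hpos : (p : ℕ) < ((f (Fin.natAdd a j)) : ℕ) := f.strictMono hlt
        have hτlt : τ (Fin.natAdd a j) < τ mid := by
          rw [Fin.lt_def, hτmid, hτdef, aux_tau_right α γ j]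
          exact aux_gsum_pos γ j hj
        have hval : ((π (f (Fin.natAdd a j)) : Fin n) : ℕ) < ((π p : Fin n) : ℕ) :=
          (hf (Fin.natAdd a j) mid).mp hτlt
        have hk'ge : l + 1 ≤ k' := by
          by_contra hgt
          push_neg at hgt
          have := hcm (show k' + 1 ≤ l + 1 from hgt)
          omega
        have hl'le : l' ≤ l := by
          by_contra hltc
          push_neg at hltc
          have := hrm (show l + 1 ≤ l' from hltc)
          omega
        have hk'eq : k' = l + 1 := by rcases htyp with h | h <;> omega
        have hl'eq : l' = l := by rcases htyp with h | h <;> omega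
        subst hk'eq; subst hl'eq
        exact ⟨hq1, hq2, hq3, hq4⟩
    have hrange : ∀ j : Fin (1 + c), ∃ x : Fin m, g x = f (Fin.natAdd a j) := by
      intro j
      have hmj := hmem j
      rw [← hrg] at hmj
      exact hmj
    choose h hgh using hrange
    have hmono : StrictMono h := by
      intro i j hij
      have h1 : Fin.natAdd a i < Fin.natAdd a j := by
        rw [Fin.lt_def] at hij ⊢; simpa using hij
      have h2 : g (h i) < g (h j) := by
        rw [hgh i, hgh j]; exact f.strictMono h1
      exact g.lt_iff_lt.mp h2
    refine hσ ⟨OrderEmbedding.ofStrictMono h hmono, fun i j => ?_⟩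
    show skewSum one1 γ i < skewSum one1 γ j ↔ σ (h i) < σ (h j)
    rw [hiso (h i) (h j), hgh i, hgh j, ← hf]
    simp only [hτdef, Fin.lt_def, aux_tau_right α γ]
end

section
/- The merge of the juxtaposition class Grid(Av(21) Av(21)) with Av(21) is finitely based; precisely, Grid(Av(21) Av(21)) ⊙ Av(21) = Av(4321, 321654, 421653, 431652, 521643, 531642). -/
open Filter Topology ENNReal

/-- The juxtaposition `Grid(C D)`: permutations with a prefix order isomorphic to a member
of `C` followed by a suffix order isomorphic to a member of `D`. -/
def juxtSet (C D : ∀ m, Set (Perm m)) (n : ℕ) : Set (Perm n) :=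
  {π | ∃ j : ℕ, j ≤ n ∧ SubpermIn π {i : Fin n | (i : ℕ) < j} C ∧
    SubpermIn π {i : Fin n | j ≤ (i : ℕ)} D}

/-- The permutation `321654`. -/
def p321654 : Perm 6 := ⟨![2,1,0,5,4,3], ![2,1,0,5,4,3], by decide, by decide⟩
/-- The permutation `421653`. -/
def p421653 : Perm 6 := ⟨![3,1,0,5,4,2], ![2,1,5,0,4,3], by decide, by decide⟩
/-- The permutation `431652`. -/
def p431652 : Perm 6 := ⟨![3,2,0,5,4,1], ![2,5,1,0,4,3], by decide, by decide⟩
/-- The permutation `521643`. -/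
def p521643 : Perm 6 := ⟨![4,1,0,5,3,2], ![2,1,5,4,0,3], by decide, by decide⟩
/-- The permutation `531642`. -/
def p531642 : Perm 6 := ⟨![4,2,0,5,3,1], ![2,5,1,4,0,3], by decide, by decide⟩

section Helpers

lemma pattern_iff {k n : ℕ} {τ : Perm k} {π : Perm n} :
    Pattern τ π ↔ ∃ q : Fin k → Fin n, StrictMono q ∧ ∀ i j, τ i < τ j ↔ π (q i) < π (q j) :=
  ⟨fun ⟨f, h⟩ => ⟨f, f.strictMono, h⟩, fun ⟨q, hq, h⟩ => ⟨OrderEmbedding.ofStrictMono q hq, h⟩⟩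

lemma pattern_of_mono {k n : ℕ} {τ : Perm k} {π : Perm n} (q : Fin k → Fin n)
    (hq : StrictMono q) (hw : StrictMono fun i => π (q (τ.symm i))) : Pattern τ π := by
  refine pattern_iff.mpr ⟨q, hq, fun i j => ?_⟩
  have h1 : π (q i) = π (q (τ.symm (τ i))) := by rw [Equiv.symm_apply_apply]
  have h2 : π (q j) = π (q (τ.symm (τ j))) := by rw [Equiv.symm_apply_apply]
  rw [h1, h2]
  exact hw.lt_iff_lt.symm

set_option linter.unnecessarySeqFocus false

lemma sm2 {α : Type*} [Preorder α] {g : Fin 2 → α} (h01 : g 0 < g 1) : StrictMono g := by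
  rw [Fin.strictMono_iff_lt_succ]
  intro i; fin_cases i <;> simpa using h01

lemma sm4 {α : Type*} [Preorder α] {g : Fin 4 → α} (h01 : g 0 < g 1) (h12 : g 1 < g 2)
    (h23 : g 2 < g 3) : StrictMono g := by
  rw [Fin.strictMono_iff_lt_succ]
  intro i; fin_cases i
  · simpa using h01
  · simpa using h12
  · simpa using h23

lemma sm6 {α : Type*} [Preorder α] {g : Fin 6 → α} (h01 : g 0 < g 1) (h12 : g 1 < g 2)
    (h23 : g 2 < g 3) (h34 : g 3 < g 4) (h45 : g 4 < g 5) : StrictMono g := by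
  rw [Fin.strictMono_iff_lt_succ]
  intro i; fin_cases i
  · simpa using h01
  · simpa using h12
  · simpa using h23
  · simpa using h34
  · simpa using h45

lemma exists_std {n : ℕ} (π : Perm n) (A : Set (Fin n)) :
    ∃ (m : ℕ) (σ : Perm m) (f : Fin m ↪o Fin n),
      Set.range ⇑f = A ∧ ∀ i j, σ i < σ j ↔ π (f i) < π (f j) := by
  classical
  set s : Finset (Fin n) := A.toFinite.toFinset with hs
  set m := s.card with hm
  set f : Fin m ↪o Fin n := s.orderEmbOfFin rfl with hf
  have hrange : Set.range ⇑f = A := by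
    rw [hf, Finset.range_orderEmbOfFin]; exact A.toFinite.coe_toFinset
  set t : Finset (Fin n) := s.image π with ht
  have htc : t.card = m := Finset.card_image_of_injective _ π.injective
  set v : Fin m ≃o {x // x ∈ t} := t.orderIsoOfFin htc with hv
  have hmem : ∀ i : Fin m, π (f i) ∈ t :=
    fun i => Finset.mem_image_of_mem π (s.orderEmbOfFin_mem rfl i)
  set e : Fin m → Fin m := fun i => v.symm ⟨π (f i), hmem i⟩ with he
  have hinj : Function.Injective e := by
    intro a b hab
    have h2 : (⟨π (f a), hmem a⟩ : {x // x ∈ t}) = ⟨π (f b), hmem b⟩ := by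
      have := congrArg v hab
      simpa only [he, OrderIso.apply_symm_apply] using this
    exact f.injective (π.injective (congrArg Subtype.val h2))
  refine ⟨m, Equiv.ofBijective e (Finite.injective_iff_bijective.mp hinj), f, hrange, ?_⟩
  intro i j
  show e i < e j ↔ _
  rw [← v.lt_iff_lt]
  simp only [he, OrderIso.apply_symm_apply]
  exact Subtype.mk_lt_mk

lemma downset_iff {m j : ℕ} (S : Set (Fin m))
    (hdc : ∀ a b : Fin m, a ≤ b → b ∈ S → a ∈ S) (hcard : S.ncard = j) (i : Fin m) :
    i ∈ S ↔ (i : ℕ) < j := by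
  constructor
  · intro hi
    have hsub : Set.Iic i ⊆ S := fun a ha => hdc a i ha hi
    have h1 := Set.ncard_le_ncard hsub S.toFinite
    have h2 : (Set.Iic i).ncard = (i : ℕ) + 1 := by
      rw [← Finset.coe_Iic, Set.ncard_coe_finset, Fin.card_Iic]
    omega
  · intro hij
    by_contra hi
    have hsub : S ⊆ Set.Iio i := by
      intro b hb
      by_contra hbi
      exact hi (hdc i b (le_of_not_gt (fun h => hbi h)) hb)
    have h1 := Set.ncard_le_ncard hsub (Set.Iio i).toFinite
    have h2 : (Set.Iio i).ncard = (i : ℕ) := by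
      rw [← Finset.coe_Iio, Set.ncard_coe_finset, Fin.card_Iio]
    omega

/-- `π` is increasing on the set `S`. -/
def IncOn {n : ℕ} (π : Perm n) (S : Set (Fin n)) : Prop :=
  ∀ a ∈ S, ∀ b ∈ S, a < b → π a < π b

lemma incOn_subperm {n : ℕ} (π : Perm n) (A : Set (Fin n)) (hA : IncOn π A) :
    SubpermIn π A (avSet (delta 2)) := by
  obtain ⟨m, σ, f, hr, hiff⟩ := exists_std π A
  refine ⟨m, σ, f, hr, hiff, ?_⟩
  intro hpat
  obtain ⟨q, hq, h2⟩ := pattern_iff.mp hpat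
  have hlt : σ (q 1) < σ (q 0) := (h2 1 0).mp (by decide)
  have h3 : π (f (q 1)) < π (f (q 0)) := (hiff (q 1) (q 0)).mp hlt
  have hq01 : f (q 0) < f (q 1) := f.strictMono (hq (by decide : (0 : Fin 2) < 1))
  have hm0 : f (q 0) ∈ A := hr ▸ Set.mem_range_self _
  have hm1 : f (q 1) ∈ A := hr ▸ Set.mem_range_self _
  exact absurd (hA _ hm0 _ hm1 hq01) (asymm h3)

lemma subperm_av21_inc {n : ℕ} {π : Perm n} {A : Set (Fin n)}
    (h : SubpermIn π A (avSet (delta 2))) : IncOn π A := by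
  obtain ⟨m, σ, f, hr, hiff, hσ⟩ := h
  intro a ha b hb hab
  rw [← hr] at ha hb
  obtain ⟨i, rfl⟩ := ha
  obtain ⟨j, rfl⟩ := hb
  have hij : i < j := f.lt_iff_lt.mp hab
  by_contra hv
  have hne : π (f j) ≠ π (f i) := by
    intro h
    have := f.injective (π.injective h)
    omega
  have hlt : π (f j) < π (f i) := lt_of_le_of_ne (le_of_not_gt hv) hne
  have hσlt : σ j < σ i := (hiff j i).mpr hlt
  refine hσ (pattern_of_mono ![i, j] (sm2 (by simpa using hij)) (sm2 ?_))
  show σ (![i, j] ((delta 2).symm 0)) < σ (![i, j] ((delta 2).symm 1))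
  have e0 : (delta 2).symm (0 : Fin 2) = 1 := by decide
  have e1 : (delta 2).symm (1 : Fin 2) = 0 := by decide
  rw [e0, e1]
  simpa using hσlt

end Helpers

section Juxt

lemma juxt_subperm {n : ℕ} (π : Perm n) (A1 A2 : Set (Fin n))
    (hsep : ∀ i ∈ A1, ∀ j ∈ A2, i < j) (h1 : IncOn π A1) (h2 : IncOn π A2) :
    SubpermIn π (A1 ∪ A2) (juxtSet (avSet (delta 2)) (avSet (delta 2))) := by
  obtain ⟨m, σ, f, hr, hiff⟩ := exists_std π (A1 ∪ A2)
  have hdisj : ∀ x, x ∈ A1 → x ∈ A2 → False := fun x hx1 hx2 => lt_irrefl x (hsep x hx1 x hx2)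
  refine ⟨m, σ, f, hr, hiff, ?_⟩
  -- the preimage of A1 is a downset of cardinality j
  set S : Set (Fin m) := {i | f i ∈ A1} with hS
  have hdc : ∀ a b : Fin m, a ≤ b → b ∈ S → a ∈ S := by
    intro a b hab hb
    rcases eq_or_lt_of_le hab with rfl | hab'
    · exact hb
    · have hfa : f a ∈ A1 ∪ A2 := hr ▸ Set.mem_range_self _
      rcases hfa with h | h
      · exact h
      · exact absurd (f.strictMono hab') (asymm (hsep _ hb _ h))
  have himg : f '' S = A1 := by
    apply Set.Subset.antisymm
    · rintro x ⟨i, hi, rfl⟩; exact hi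
    · intro x hx
      have : x ∈ Set.range ⇑f := hr ▸ Set.mem_union_left _ hx
      obtain ⟨i, rfl⟩ := this
      exact ⟨i, hx, rfl⟩
  set j := A1.ncard with hj
  have hcardS : S.ncard = j := by
    rw [← himg, Set.ncard_image_of_injective _ f.injective] at hj
    exact hj.symm
  have hkey : ∀ i : Fin m, f i ∈ A1 ↔ (i : ℕ) < j := fun i => downset_iff S hdc hcardS i
  have hkey2 : ∀ i : Fin m, ¬ ((i : ℕ) < j) → f i ∈ A2 := by
    intro i hi
    have hfa : f i ∈ A1 ∪ A2 := hr ▸ Set.mem_range_self _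
    rcases hfa with h | h
    · exact absurd ((hkey i).mp h) hi
    · exact h
  have hjm : j ≤ m := by
    have : S.ncard ≤ (Set.univ : Set (Fin m)).ncard :=
      Set.ncard_le_ncard (Set.subset_univ S) Set.finite_univ
    rwa [hcardS, Set.ncard_univ, Nat.card_eq_fintype_card, Fintype.card_fin] at this
  refine ⟨j, hjm, ?_, ?_⟩
  · refine incOn_subperm σ _ ?_
    intro a ha b hb hab
    have hfab : f a < f b := f.strictMono hab
    exact (hiff a b).mpr (h1 _ ((hkey a).mpr ha) _ ((hkey b).mpr hb) hfab)
  · refine incOn_subperm σ _ ?_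
    intro a ha b hb hab
    have hfab : f a < f b := f.strictMono hab
    exact (hiff a b).mpr
      (h2 _ (hkey2 a (by simpa using Nat.not_lt.mpr ha)) _
        (hkey2 b (by simpa using Nat.not_lt.mpr hb)) hfab)

lemma subperm_juxt_elim {n : ℕ} {π : Perm n} {A : Set (Fin n)}
    (h : SubpermIn π A (juxtSet (avSet (delta 2)) (avSet (delta 2)))) :
    ∃ A1 A2 : Set (Fin n), A = A1 ∪ A2 ∧ (∀ i ∈ A1, ∀ j ∈ A2, i < j) ∧
      IncOn π A1 ∧ IncOn π A2 := by
  obtain ⟨m, σ, f, hr, hiff, hσ⟩ := h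
  obtain ⟨j, hjm, hpre, hsuf⟩ := hσ
  have hinc1 : IncOn σ {i : Fin m | (i : ℕ) < j} := subperm_av21_inc hpre
  have hinc2 : IncOn σ {i : Fin m | j ≤ (i : ℕ)} := subperm_av21_inc hsuf
  refine ⟨f '' {i | (i : ℕ) < j}, f '' {i | j ≤ (i : ℕ)}, ?_, ?_, ?_, ?_⟩
  · rw [← hr, ← Set.image_union]
    apply Set.Subset.antisymm
    · rintro x ⟨i, rfl⟩
      exact ⟨i, by by_cases hc : (i : ℕ) < j; exacts [Or.inl hc, Or.inr (Nat.not_lt.mp hc)], rfl⟩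
    · rintro x ⟨i, _, rfl⟩; exact Set.mem_range_self _
  · rintro x ⟨a, ha, rfl⟩ y ⟨b, hb, rfl⟩
    exact f.strictMono (by simp only [Set.mem_setOf_eq] at ha hb; omega)
  · rintro x ⟨a, ha, rfl⟩ y ⟨b, hb, rfl⟩ hab
    exact (hiff a b).mp (hinc1 a ha b hb (f.lt_iff_lt.mp hab))
  · rintro x ⟨a, ha, rfl⟩ y ⟨b, hb, rfl⟩ hab
    exact (hiff a b).mp (hinc2 a ha b hb (f.lt_iff_lt.mp hab))

end Juxt

section Construct

lemma construct {n : ℕ} (π : Perm n) (T : ℕ)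
    (hL : ∀ a b c : Fin n, a < b → b < c → (c : ℕ) < T → π b < π a → π c < π b → False)
    (hR : ∀ a b c : Fin n, T ≤ (a : ℕ) → a < b → b < c → π b < π a → π c < π b → False)
    (no4 : ∀ a b c d : Fin n, a < b → b < c → c < d →
      π b < π a → π c < π b → π d < π c → False) :
    π ∈ mergeSet (juxtSet (avSet (delta 2)) (avSet (delta 2))) (avSet (delta 2)) n := by
  classical
  set AL : Set (Fin n) := {i | (i : ℕ) < T ∧ ∀ i', i' < i → π i' < π i} with hAL
  set BR : Set (Fin n) := {i | T ≤ (i : ℕ) ∧ ∀ j, i < j → π i < π j} with hBR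
  have hsep : ∀ i ∈ AL, ∀ j ∈ BR, i < j := by
    intro i hi j hj
    have h1 : (i : ℕ) < T := hi.1
    have h2 : T ≤ (j : ℕ) := hj.1
    omega
  refine ⟨AL ∪ BR, juxt_subperm π AL BR hsep ?_ ?_, ?_⟩
  · intro a ha b hb hab
    exact hb.2 a hab
  · intro a ha b hb hab
    exact ha.2 b hab
  · refine incOn_subperm π _ ?_
    intro a ha b hb hab
    simp only [Set.mem_compl_iff, Set.mem_union, not_or] at ha hb
    by_contra hv
    have hne : π b ≠ π a := by
      intro h
      have := π.injective h
      omega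
    have hba : π b < π a := lt_of_le_of_ne (le_of_not_gt hv) hne
    by_cases hbT : (b : ℕ) < T
    · -- both in the left region; a is not a left-to-right maximum there
      have haT : (a : ℕ) < T := by omega
      have : ¬ ∀ i', i' < a → π i' < π a := fun h => ha.1 ⟨haT, h⟩
      push_neg at this
      obtain ⟨i0, hi0a, hi0⟩ := this
      have hne0 : π a ≠ π i0 := by
        intro h; have := π.injective h; omega
      exact hL i0 a b hi0a hab hbT (lt_of_le_of_ne hi0 hne0) hba
    · by_cases haT : T ≤ (a : ℕ)
      · -- both in the right region; b is not a right-to-left minimum there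
        have : ¬ ∀ j, b < j → π b < π j := fun h => hb.2 ⟨Nat.not_lt.mp hbT, h⟩
        push_neg at this
        obtain ⟨i3, hbi3, hi3⟩ := this
        have hne3 : π i3 ≠ π b := by
          intro h; have := π.injective h; omega
        exact hR a b i3 haT hab hbi3 hba (lt_of_le_of_ne hi3 hne3)
      · -- a left of the cut, b right of it
        have haT' : (a : ℕ) < T := by omega
        have h1 : ¬ ∀ i', i' < a → π i' < π a := fun h => ha.1 ⟨haT', h⟩
        have h2 : ¬ ∀ j, b < j → π b < π j := fun h => hb.2 ⟨Nat.not_lt.mp hbT, h⟩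
        push_neg at h1 h2
        obtain ⟨i0, hi0a, hi0⟩ := h1
        obtain ⟨i3, hbi3, hi3⟩ := h2
        have hne0 : π a ≠ π i0 := by intro h; have := π.injective h; omega
        have hne3 : π i3 ≠ π b := by intro h; have := π.injective h; omega
        exact no4 i0 a b i3 hi0a hab hbi3
          (lt_of_le_of_ne hi0 hne0) hba
          (lt_of_le_of_ne hi3 hne3)

end Construct

section Forward

lemma merge_no_desc {n : ℕ} {π : Perm n}
    (h : π ∈ mergeSet (juxtSet (avSet (delta 2)) (avSet (delta 2))) (avSet (delta 2)) n) :
    (∀ a b c d : Fin n, a < b → b < c → c < d →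
      π b < π a → π c < π b → π d < π c → False) ∧
    (∀ a b c d e f : Fin n, a < b → b < c → c < d → d < e → e < f →
      π b < π a → π c < π b → π e < π d → π f < π e → False) := by
  obtain ⟨A, hjux, hcomp⟩ := h
  obtain ⟨A1, A2, hA, hsep, hinc1, hinc2⟩ := subperm_juxt_elim hjux
  have hincC : IncOn π Aᶜ := subperm_av21_inc hcomp
  have htot : ∀ x : Fin n, x ∈ A1 ∨ x ∈ A2 ∨ x ∈ Aᶜ := by
    intro x
    by_cases hx : x ∈ A
    · rw [hA] at hx
      rcases hx with h | h
      · exact Or.inl h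
      · exact Or.inr (Or.inl h)
    · exact Or.inr (Or.inr hx)
  have nb : ∀ (S : Set (Fin n)), IncOn π S → ∀ x y : Fin n, x < y → π y < π x →
      ¬(x ∈ S ∧ y ∈ S) := by
    rintro S hS x y hxy hyx ⟨hxS, hyS⟩
    exact absurd (hS x hxS y hyS hxy) (asymm hyx)
  constructor
  · intro a b c d hab hbc hcd pba pcb pdc
    have pca : π c < π a := pcb.trans pba
    have pda : π d < π a := pdc.trans pca
    have pdb : π d < π b := pdc.trans pcb
    have e1 := nb _ hinc1 a b hab pba
    have e2 := nb _ hinc1 a c (hab.trans hbc) pca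
    have e3 := nb _ hinc1 a d ((hab.trans hbc).trans hcd) pda
    have e4 := nb _ hinc1 b c hbc pcb
    have e5 := nb _ hinc1 b d (hbc.trans hcd) pdb
    have e6 := nb _ hinc1 c d hcd pdc
    have f1 := nb _ hinc2 a b hab pba
    have f2 := nb _ hinc2 a c (hab.trans hbc) pca
    have f3 := nb _ hinc2 a d ((hab.trans hbc).trans hcd) pda
    have f4 := nb _ hinc2 b c hbc pcb
    have f5 := nb _ hinc2 b d (hbc.trans hcd) pdb
    have f6 := nb _ hinc2 c d hcd pdc
    have g1 := nb _ hincC a b hab pba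
    have g2 := nb _ hincC a c (hab.trans hbc) pca
    have g3 := nb _ hincC a d ((hab.trans hbc).trans hcd) pda
    have g4 := nb _ hincC b c hbc pcb
    have g5 := nb _ hincC b d (hbc.trans hcd) pdb
    have g6 := nb _ hincC c d hcd pdc
    -- positions a < b, with a ∈ A2 and b ∈ A1 is impossible
    have x1 : ¬(a ∈ A2 ∧ b ∈ A1) := fun ⟨h2, h1⟩ => absurd (hsep _ h1 _ h2) (by omega)
    have x2 : ¬(a ∈ A2 ∧ c ∈ A1) := fun ⟨h2, h1⟩ => absurd (hsep _ h1 _ h2) (by omega)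
    have x3 : ¬(a ∈ A2 ∧ d ∈ A1) := fun ⟨h2, h1⟩ => absurd (hsep _ h1 _ h2) (by omega)
    have x4 : ¬(b ∈ A2 ∧ c ∈ A1) := fun ⟨h2, h1⟩ => absurd (hsep _ h1 _ h2) (by omega)
    have x5 : ¬(b ∈ A2 ∧ d ∈ A1) := fun ⟨h2, h1⟩ => absurd (hsep _ h1 _ h2) (by omega)
    have x6 : ¬(c ∈ A2 ∧ d ∈ A1) := fun ⟨h2, h1⟩ => absurd (hsep _ h1 _ h2) (by omega)
    rcases htot a with h1 | h1 | h1 <;> rcases htot b with h2 | h2 | h2 <;>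
      rcases htot c with h3 | h3 | h3 <;> rcases htot d with h4 | h4 | h4 <;>
      first
        | exact e1 ⟨h1, h2⟩ | exact e2 ⟨h1, h3⟩ | exact e3 ⟨h1, h4⟩
        | exact e4 ⟨h2, h3⟩ | exact e5 ⟨h2, h4⟩ | exact e6 ⟨h3, h4⟩
        | exact f1 ⟨h1, h2⟩ | exact f2 ⟨h1, h3⟩ | exact f3 ⟨h1, h4⟩
        | exact f4 ⟨h2, h3⟩ | exact f5 ⟨h2, h4⟩ | exact f6 ⟨h3, h4⟩
        | exact g1 ⟨h1, h2⟩ | exact g2 ⟨h1, h3⟩ | exact g3 ⟨h1, h4⟩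
        | exact g4 ⟨h2, h3⟩ | exact g5 ⟨h2, h4⟩ | exact g6 ⟨h3, h4⟩
        | exact x1 ⟨h1, h2⟩ | exact x2 ⟨h1, h3⟩ | exact x3 ⟨h1, h4⟩
        | exact x4 ⟨h2, h3⟩ | exact x5 ⟨h2, h4⟩ | exact x6 ⟨h3, h4⟩
  · intro a b c d e f hab hbc hcd hde hef pba pcb ped pfe
    have pca : π c < π a := pcb.trans pba
    have pfd : π f < π d := pfe.trans ped
    have e1 := nb _ hinc1 a b hab pba
    have e2 := nb _ hinc1 a c (hab.trans hbc) pca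
    have e4 := nb _ hinc1 b c hbc pcb
    have f1 := nb _ hinc2 a b hab pba
    have f2 := nb _ hinc2 a c (hab.trans hbc) pca
    have f4 := nb _ hinc2 b c hbc pcb
    have g1 := nb _ hincC a b hab pba
    have g2 := nb _ hincC a c (hab.trans hbc) pca
    have g4 := nb _ hincC b c hbc pcb
    have e1' := nb _ hinc1 d e hde ped
    have e2' := nb _ hinc1 d f (hde.trans hef) pfd
    have e4' := nb _ hinc1 e f hef pfe
    have f1' := nb _ hinc2 d e hde ped
    have f2' := nb _ hinc2 d f (hde.trans hef) pfd
    have f4' := nb _ hinc2 e f hef pfe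
    have g1' := nb _ hincC d e hde ped
    have g2' := nb _ hincC d f (hde.trans hef) pfd
    have g4' := nb _ hincC e f hef pfe
    have hA2 : a ∈ A2 ∨ b ∈ A2 ∨ c ∈ A2 := by
      by_contra hcon
      push_neg at hcon
      obtain ⟨na, nbb, nc⟩ := hcon
      have ma : a ∈ A1 ∨ a ∈ Aᶜ := by rcases htot a with h | h | h; exacts [Or.inl h, absurd h na, Or.inr h]
      have mb : b ∈ A1 ∨ b ∈ Aᶜ := by rcases htot b with h | h | h; exacts [Or.inl h, absurd h nbb, Or.inr h]
      have mc : c ∈ A1 ∨ c ∈ Aᶜ := by rcases htot c with h | h | h; exacts [Or.inl h, absurd h nc, Or.inr h]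
      rcases ma with h1 | h1 <;> rcases mb with h2 | h2 <;> rcases mc with h3 | h3 <;>
        first
          | exact e1 ⟨h1, h2⟩ | exact e2 ⟨h1, h3⟩ | exact e4 ⟨h2, h3⟩
          | exact g1 ⟨h1, h2⟩ | exact g2 ⟨h1, h3⟩ | exact g4 ⟨h2, h3⟩
    have hA1 : d ∈ A1 ∨ e ∈ A1 ∨ f ∈ A1 := by
      by_contra hcon
      push_neg at hcon
      obtain ⟨nd, ne, nf⟩ := hcon
      have md : d ∈ A2 ∨ d ∈ Aᶜ := by rcases htot d with h | h | h; exacts [absurd h nd, Or.inl h, Or.inr h]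
      have me : e ∈ A2 ∨ e ∈ Aᶜ := by rcases htot e with h | h | h; exacts [absurd h ne, Or.inl h, Or.inr h]
      have mf : f ∈ A2 ∨ f ∈ Aᶜ := by rcases htot f with h | h | h; exacts [absurd h nf, Or.inl h, Or.inr h]
      rcases md with h1 | h1 <;> rcases me with h2 | h2 <;> rcases mf with h3 | h3 <;>
        first
          | exact f1' ⟨h1, h2⟩ | exact f2' ⟨h1, h3⟩ | exact f4' ⟨h2, h3⟩
          | exact g1' ⟨h1, h2⟩ | exact g2' ⟨h1, h3⟩ | exact g4' ⟨h2, h3⟩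
    rcases hA2 with h2 | h2 | h2 <;> rcases hA1 with h1 | h1 | h1 <;>
      exact absurd (hsep _ h1 _ h2) (by omega)

end Forward

/-- `Grid(Av(21) Av(21)) ⊙ Av(21)
= Av(4321, 321654, 421653, 431652, 521643, 531642)`. -/
theorem juxt_merge_av21_basis (n : ℕ) :
    mergeSet (juxtSet (avSet (delta 2)) (avSet (delta 2))) (avSet (delta 2)) n =
      {π : Perm n | ¬ Pattern (delta 4) π ∧ ¬ Pattern p321654 π ∧ ¬ Pattern p421653 π ∧
        ¬ Pattern p431652 π ∧ ¬ Pattern p521643 π ∧ ¬ Pattern p531642 π} := by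
  ext π
  simp only [Set.mem_setOf_eq]
  constructor
  · intro h
    obtain ⟨no4c, notwoc⟩ := merge_no_desc h
    refine ⟨?_, ?_, ?_, ?_, ?_, ?_⟩ <;> intro hp <;>
      obtain ⟨q, hq, hiff⟩ := pattern_iff.mp hp
    · exact no4c (q 0) (q 1) (q 2) (q 3) (hq (by decide)) (hq (by decide)) (hq (by decide))
        ((hiff 1 0).mp (by decide)) ((hiff 2 1).mp (by decide)) ((hiff 3 2).mp (by decide))
    · exact notwoc (q 0) (q 1) (q 2) (q 3) (q 4) (q 5) (hq (by decide)) (hq (by decide))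
        (hq (by decide)) (hq (by decide)) (hq (by decide))
        ((hiff 1 0).mp (by decide)) ((hiff 2 1).mp (by decide))
        ((hiff 4 3).mp (by decide)) ((hiff 5 4).mp (by decide))
    · exact notwoc (q 0) (q 1) (q 2) (q 3) (q 4) (q 5) (hq (by decide)) (hq (by decide))
        (hq (by decide)) (hq (by decide)) (hq (by decide))
        ((hiff 1 0).mp (by decide)) ((hiff 2 1).mp (by decide))
        ((hiff 4 3).mp (by decide)) ((hiff 5 4).mp (by decide))
    · exact notwoc (q 0) (q 1) (q 2) (q 3) (q 4) (q 5) (hq (by decide)) (hq (by decide))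
        (hq (by decide)) (hq (by decide)) (hq (by decide))
        ((hiff 1 0).mp (by decide)) ((hiff 2 1).mp (by decide))
        ((hiff 4 3).mp (by decide)) ((hiff 5 4).mp (by decide))
    · exact notwoc (q 0) (q 1) (q 2) (q 3) (q 4) (q 5) (hq (by decide)) (hq (by decide))
        (hq (by decide)) (hq (by decide)) (hq (by decide))
        ((hiff 1 0).mp (by decide)) ((hiff 2 1).mp (by decide))
        ((hiff 4 3).mp (by decide)) ((hiff 5 4).mp (by decide))
    · exact notwoc (q 0) (q 1) (q 2) (q 3) (q 4) (q 5) (hq (by decide)) (hq (by decide))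
        (hq (by decide)) (hq (by decide)) (hq (by decide))
        ((hiff 1 0).mp (by decide)) ((hiff 2 1).mp (by decide))
        ((hiff 4 3).mp (by decide)) ((hiff 5 4).mp (by decide))
  · rintro ⟨h4, h321654, h421653, h431652, h521643, h531642⟩
    have hne : ∀ x y : Fin n, x ≠ y → π x ≠ π y := fun x y hxy h => hxy (π.injective h)
    have no4 : ∀ a b c d : Fin n, a < b → b < c → c < d →
        π b < π a → π c < π b → π d < π c → False := by
      intro a b c d hab hbc hcd pba pcb pdc
      apply h4
      refine pattern_of_mono ![a, b, c, d]
        (sm4 (by simpa using hab) (by simpa using hbc) (by simpa using hcd)) (sm4 ?_ ?_ ?_)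
      · simp only [show (delta 4).symm (0 : Fin 4) = 3 from by decide,
          show (delta 4).symm (1 : Fin 4) = 2 from by decide]
        simpa using pdc
      · simp only [show (delta 4).symm (1 : Fin 4) = 2 from by decide,
          show (delta 4).symm (2 : Fin 4) = 1 from by decide]
        simpa using pcb
      · simp only [show (delta 4).symm (2 : Fin 4) = 1 from by decide,
          show (delta 4).symm (3 : Fin 4) = 0 from by decide]
        simpa using pba
    have notwo : ∀ a b c d e f : Fin n, a < b → b < c → c < d → d < e → e < f →
        π b < π a → π c < π b → π e < π d → π f < π e → False := by
      intro a b c d e f hab hbc hcd hde hef pba pcb ped pfe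
      have pad : π a < π d := by
        by_contra hv
        exact no4 a d e f (by omega) hde hef
          (lt_of_le_of_ne (le_of_not_gt hv) (hne d a (by omega))) ped pfe
      have pbe : π b < π e := by
        by_contra hv
        exact no4 a b e f hab (by omega) hef pba
          (lt_of_le_of_ne (le_of_not_gt hv) (hne e b (by omega))) pfe
      have pcf : π c < π f := by
        by_contra hv
        exact no4 a b c f hab hbc (by omega) pba pcb
          (lt_of_le_of_ne (le_of_not_gt hv) (hne f c (by omega)))
      have hsm : StrictMono ![a, b, c, d, e, f] :=
        sm6 (by simpa using hab) (by simpa using hbc) (by simpa using hcd)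
          (by simpa using hde) (by simpa using hef)
      rcases lt_trichotomy (π a) (π f) with haf | haf | haf
      · -- 321654 : value-sorted positions c b a f e d
        refine h321654 (pattern_of_mono ![a, b, c, d, e, f] hsm (sm6 ?_ ?_ ?_ ?_ ?_))
        · simp only [show p321654.symm (0 : Fin 6) = 2 from by decide,
            show p321654.symm (1 : Fin 6) = 1 from by decide]
          simpa using pcb
        · simp only [show p321654.symm (1 : Fin 6) = 1 from by decide,
            show p321654.symm (2 : Fin 6) = 0 from by decide]
          simpa using pba
        · simp only [show p321654.symm (2 : Fin 6) = 0 from by decide,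
            show p321654.symm (3 : Fin 6) = 5 from by decide]
          simpa using haf
        · simp only [show p321654.symm (3 : Fin 6) = 5 from by decide,
            show p321654.symm (4 : Fin 6) = 4 from by decide]
          simpa using pfe
        · simp only [show p321654.symm (4 : Fin 6) = 4 from by decide,
            show p321654.symm (5 : Fin 6) = 3 from by decide]
          simpa using ped
      · exact hne a f (by omega) haf
      · rcases lt_trichotomy (π a) (π e) with hae | hae | hae
        · rcases lt_trichotomy (π b) (π f) with hbf | hbf | hbf
          · -- 421653 : value-sorted positions c b f a e d
            refine h421653 (pattern_of_mono ![a, b, c, d, e, f] hsm (sm6 ?_ ?_ ?_ ?_ ?_))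
            · simp only [show p421653.symm (0 : Fin 6) = 2 from by decide,
                show p421653.symm (1 : Fin 6) = 1 from by decide]
              simpa using pcb
            · simp only [show p421653.symm (1 : Fin 6) = 1 from by decide,
                show p421653.symm (2 : Fin 6) = 5 from by decide]
              simpa using hbf
            · simp only [show p421653.symm (2 : Fin 6) = 5 from by decide,
                show p421653.symm (3 : Fin 6) = 0 from by decide]
              simpa using haf
            · simp only [show p421653.symm (3 : Fin 6) = 0 from by decide,
                show p421653.symm (4 : Fin 6) = 4 from by decide]
              simpa using hae
            · simp only [show p421653.symm (4 : Fin 6) = 4 from by decide,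
                show p421653.symm (5 : Fin 6) = 3 from by decide]
              simpa using ped
          · exact hne b f (by omega) hbf
          · -- 431652 : value-sorted positions c f b a e d
            refine h431652 (pattern_of_mono ![a, b, c, d, e, f] hsm (sm6 ?_ ?_ ?_ ?_ ?_))
            · simp only [show p431652.symm (0 : Fin 6) = 2 from by decide,
                show p431652.symm (1 : Fin 6) = 5 from by decide]
              simpa using pcf
            · simp only [show p431652.symm (1 : Fin 6) = 5 from by decide,
                show p431652.symm (2 : Fin 6) = 1 from by decide]
              simpa using hbf
            · simp only [show p431652.symm (2 : Fin 6) = 1 from by decide,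
                show p431652.symm (3 : Fin 6) = 0 from by decide]
              simpa using pba
            · simp only [show p431652.symm (3 : Fin 6) = 0 from by decide,
                show p431652.symm (4 : Fin 6) = 4 from by decide]
              simpa using hae
            · simp only [show p431652.symm (4 : Fin 6) = 4 from by decide,
                show p431652.symm (5 : Fin 6) = 3 from by decide]
              simpa using ped
        · exact hne a e (by omega) hae
        · rcases lt_trichotomy (π b) (π f) with hbf | hbf | hbf
          · -- 521643 : value-sorted positions c b f e a d
            refine h521643 (pattern_of_mono ![a, b, c, d, e, f] hsm (sm6 ?_ ?_ ?_ ?_ ?_))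
            · simp only [show p521643.symm (0 : Fin 6) = 2 from by decide,
                show p521643.symm (1 : Fin 6) = 1 from by decide]
              simpa using pcb
            · simp only [show p521643.symm (1 : Fin 6) = 1 from by decide,
                show p521643.symm (2 : Fin 6) = 5 from by decide]
              simpa using hbf
            · simp only [show p521643.symm (2 : Fin 6) = 5 from by decide,
                show p521643.symm (3 : Fin 6) = 4 from by decide]
              simpa using pfe
            · simp only [show p521643.symm (3 : Fin 6) = 4 from by decide,
                show p521643.symm (4 : Fin 6) = 0 from by decide]
              simpa using hae
            · simp only [show p521643.symm (4 : Fin 6) = 0 from by decide,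
                show p521643.symm (5 : Fin 6) = 3 from by decide]
              simpa using pad
          · exact hne b f (by omega) hbf
          · -- 531642 : value-sorted positions c f b e a d
            refine h531642 (pattern_of_mono ![a, b, c, d, e, f] hsm (sm6 ?_ ?_ ?_ ?_ ?_))
            · simp only [show p531642.symm (0 : Fin 6) = 2 from by decide,
                show p531642.symm (1 : Fin 6) = 5 from by decide]
              simpa using pcf
            · simp only [show p531642.symm (1 : Fin 6) = 5 from by decide,
                show p531642.symm (2 : Fin 6) = 1 from by decide]
              simpa using hbf
            · simp only [show p531642.symm (2 : Fin 6) = 1 from by decide,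
                show p531642.symm (3 : Fin 6) = 4 from by decide]
              simpa using pbe
            · simp only [show p531642.symm (3 : Fin 6) = 4 from by decide,
                show p531642.symm (4 : Fin 6) = 0 from by decide]
              simpa using hae
            · simp only [show p531642.symm (4 : Fin 6) = 0 from by decide,
                show p531642.symm (5 : Fin 6) = 3 from by decide]
              simpa using pad
    by_cases hD : ∃ c : Fin n, ∃ a b : Fin n, a < b ∧ b < c ∧ π b < π a ∧ π c < π b
    · obtain ⟨t, ht, hmin⟩ :=
        Set.exists_min_image {c : Fin n | ∃ a b, a < b ∧ b < c ∧ π b < π a ∧ π c < π b} id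
          (Set.toFinite _) (by obtain ⟨c, a, b, h⟩ := hD; exact ⟨c, a, b, h⟩)
      obtain ⟨a0, b0, ha0b0, hb0t, p1, p2⟩ := ht
      apply construct π (t : ℕ)
      · intro x y z hxy hyz hzT pyx pzy
        have := hmin z ⟨x, y, hxy, hyz, pyx, pzy⟩
        simp only [id_eq] at this
        omega
      · intro x y z hTx hxy hyz pyx pzy
        rcases eq_or_lt_of_le hTx with hx | hx
        · have hxt : x = t := by
            apply Fin.ext
            omega
          subst hxt
          exact no4 a0 b0 x y ha0b0 hb0t hxy p1 p2 pyx
        · exact notwo a0 b0 t x y z ha0b0 hb0t (by omega) hxy hyz p1 p2 pyx pzy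
      · exact no4
    · apply construct π n
      · intro x y z hxy hyz _ pyx pzy
        exact hD ⟨z, x, y, hxy, hyz, pyx, pzy⟩
      · intro x y z hTx _ _ _ _
        have := x.isLt
        omega
      · exact no4
end
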